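/- arXiv:2201.09697 — 4 statements merged into one kernel-verified Lean document; each statement's English description precedes it below -/
import Mathlib

section
/- Let 0 < b ≤ a < 1 and ε > 0. There exists a constant C = C(a, b, ε) such that for every divergence-free vector field V ∈ H^a(𝕋²;ℝ²) and every f ∈ H^{−b}(𝕋²), the distribution V·∇f := div(Vf) satisfies ‖V·∇f‖_{H^{−2−b−ε}} ≤ C ‖V‖_{H^a} ‖f‖_{H^{−b}}. Here Vf is the vector-valued distribution with components ⟨(Vf)_i, φ⟩ = ⟨f, V_i φ⟩ for φ ∈ C^∞(𝕋²) (well defined since V_i φ ∈ H^a ⊂ H^b), and div is the distributional divergence. -/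
open MeasureTheory Filter
open scoped ENNReal NNReal

noncomputable section

namespace GaleatiLuo

/-- The unit box `[0,1)^d ⊆ ℝ^d`, a fundamental domain for the torus `𝕋^d = ℝ^d/ℤ^d`. -/
def box (d : ℕ) : Set (Fin d → ℝ) := Set.univ.pi fun _ => Set.Ico (0 : ℝ) 1

/-- Lebesgue measure restricted to the fundamental domain: the measure of the torus. -/
def μT (d : ℕ) : Measure (Fin d → ℝ) := volume.restrict (box d)

/-- `ℤ^d`-periodicity of a scalar function on `ℝ^d`. -/
def ZPeriodic {d : ℕ} (f : (Fin d → ℝ) → ℝ) : Prop :=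
  ∀ (x : Fin d → ℝ) (k : Fin d → ℤ), f (x + fun i => (k i : ℝ)) = f x

/-- `ℤ^d`-periodicity of a vector field on `ℝ^d`. -/
def ZPeriodicV {d : ℕ} (h : (Fin d → ℝ) → Fin d → ℝ) : Prop :=
  ∀ (x : Fin d → ℝ) (k : Fin d → ℤ), h (x + fun i => (k i : ℝ)) = h x

/-- Euclidean norm of a lattice point `k ∈ ℤ^d`. -/
def znorm {d : ℕ} (k : Fin d → ℤ) : ℝ := Real.sqrt (∑ i, ((k i : ℝ)) ^ 2)

/-- The `k`-th Fourier coefficient `f̂(k) = ∫_{[0,1)^d} f(x) e^{-2πik·x} dx`. -/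
def fc {d : ℕ} (f : (Fin d → ℝ) → ℝ) (k : Fin d → ℤ) : ℂ :=
  ∫ x, (f x : ℂ) *
    Complex.exp (-(2 * (Real.pi : ℂ) * Complex.I) * ((∑ i, (k i : ℝ) * x i : ℝ) : ℂ)) ∂(μT d)

/-- Squared Sobolev norm `‖f‖_{H^s}² = Σ_k (1+|k|²)^s |f̂(k)|²` (valued in `ℝ≥0∞`). -/
def sobNormSq {d : ℕ} (s : ℝ) (f : (Fin d → ℝ) → ℝ) : ℝ≥0∞ :=
  ∑' k : Fin d → ℤ, ENNReal.ofReal ((1 + znorm k ^ 2) ^ s) * (‖fc f k‖₊ : ℝ≥0∞) ^ 2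

/-- Sobolev norm `‖f‖_{H^s}`. -/
def sobNorm {d : ℕ} (s : ℝ) (f : (Fin d → ℝ) → ℝ) : ℝ≥0∞ := sobNormSq s f ^ (1 / 2 : ℝ)

/-- Squared `H^s` norm of a vector field (sum over components). -/
def sobNormSqV {d : ℕ} (s : ℝ) (h : (Fin d → ℝ) → Fin d → ℝ) : ℝ≥0∞ :=
  ∑ i, sobNormSq s (fun x => h x i)

/-- `L^p(𝕋^d)` norm. -/
def spLp {d : ℕ} (p : ℝ≥0∞) (f : (Fin d → ℝ) → ℝ) : ℝ≥0∞ := eLpNorm f p (μT d)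

/-- `L^p(𝕋^d)` norm of a vector field. -/
def spLpV {d : ℕ} (p : ℝ≥0∞) (h : (Fin d → ℝ) → Fin d → ℝ) : ℝ≥0∞ := eLpNorm h p (μT d)

/-- Mixed norm `‖u‖_{L^q_t L^p_x}` on `[0,T]` (essential supremum when `q = ∞`). -/
def LqLp {d : ℕ} (T : ℝ) (q p : ℝ≥0∞) (u : ℝ → (Fin d → ℝ) → ℝ) : ℝ≥0∞ :=
  if q = ∞ then essSup (fun t => spLp p (u t)) (volume.restrict (Set.Icc (0:ℝ) T))
  else (∫⁻ t in Set.Icc (0:ℝ) T, spLp p (u t) ^ q.toReal) ^ (1 / q.toReal)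

/-- Mixed norm `‖u‖_{L^q_t L^p_x}` for vector fields. -/
def LqLpV {d : ℕ} (T : ℝ) (q p : ℝ≥0∞) (u : ℝ → (Fin d → ℝ) → Fin d → ℝ) : ℝ≥0∞ :=
  if q = ∞ then essSup (fun t => spLpV p (u t)) (volume.restrict (Set.Icc (0:ℝ) T))
  else (∫⁻ t in Set.Icc (0:ℝ) T, spLpV p (u t) ^ q.toReal) ^ (1 / q.toReal)

/-- `i`-th partial derivative. -/
def pd {d : ℕ} (i : Fin d) (φ : (Fin d → ℝ) → ℝ) : (Fin d → ℝ) → ℝ :=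
  fun x => fderiv ℝ φ x (Pi.single i 1)

/-- Laplacian. -/
def lap {d : ℕ} (φ : (Fin d → ℝ) → ℝ) : (Fin d → ℝ) → ℝ :=
  fun x => ∑ i, pd i (pd i φ) x

/-- `L²(𝕋^d)` pairing `⟨f, g⟩ = ∫_{𝕋^d} f g`. -/
def pairT {d : ℕ} (f g : (Fin d → ℝ) → ℝ) : ℝ := ∫ x, f x * g x ∂(μT d)

/-- Smooth periodic test function. -/
def Test {d : ℕ} (φ : (Fin d → ℝ) → ℝ) : Prop := ContDiff ℝ (⊤ : ℕ∞) φ ∧ ZPeriodic φ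

/-- `D` is the distributional divergence of the vector field `h` on the torus. -/
def IsWeakDiv {d : ℕ} (h : (Fin d → ℝ) → Fin d → ℝ) (D : (Fin d → ℝ) → ℝ) : Prop :=
  ∀ φ, Test φ →
    ∫ x, (∑ i, h x i * pd i φ x) ∂(μT d) = - ∫ x, D x * φ x ∂(μT d)

/-- `g` is the weak spatial gradient of `f` on the torus. -/
def HasWeakGrad {d : ℕ} (f : (Fin d → ℝ) → ℝ) (g : (Fin d → ℝ) → Fin d → ℝ) : Prop :=
  ∀ φ, Test φ → ∀ i,
    ∫ x, f x * pd i φ x ∂(μT d) = - ∫ x, g x i * φ x ∂(μT d)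

/-- Continuity in time with values in `L^p(𝕋^d)`. -/
def ContLp {d : ℕ} (T : ℝ) (p : ℝ≥0∞) (f : ℝ → (Fin d → ℝ) → ℝ) : Prop :=
  ∀ t ∈ Set.Icc (0:ℝ) T, ∀ ε : ℝ, 0 < ε → ∃ δ > (0:ℝ), ∀ s ∈ Set.Icc (0:ℝ) T,
    |s - t| < δ → spLp p (fun x => f s x - f t x) < ENNReal.ofReal ε

/-- Continuity in time with values in `H^{s₀}(𝕋^d)`. -/
def ContSob {d : ℕ} (T s₀ : ℝ) (f : ℝ → (Fin d → ℝ) → ℝ) : Prop :=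
  ∀ t ∈ Set.Icc (0:ℝ) T, ∀ ε : ℝ, 0 < ε → ∃ δ > (0:ℝ), ∀ s ∈ Set.Icc (0:ℝ) T,
    |s - t| < δ → sobNorm s₀ (fun x => f s x - f t x) < ENNReal.ofReal ε

/-- `C⁰_t H^s` norm: `sup_{t∈[0,T]} ‖f_t‖_{H^s}`. -/
def supSob {d : ℕ} (T s : ℝ) (f : ℝ → (Fin d → ℝ) → ℝ) : ℝ≥0∞ :=
  ⨆ t ∈ Set.Icc (0:ℝ) T, sobNorm s (f t)

/-- `sup_{t∈[0,T]} ‖f_t‖_{L^p}`. -/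
def supLp {d : ℕ} (T : ℝ) (p : ℝ≥0∞) (f : ℝ → (Fin d → ℝ) → ℝ) : ℝ≥0∞ :=
  ⨆ t ∈ Set.Icc (0:ℝ) T, spLp p (f t)

/-- `L²_t H¹_x` norm. -/
def L2H1 {d : ℕ} (T : ℝ) (f : ℝ → (Fin d → ℝ) → ℝ) : ℝ≥0∞ :=
  (∫⁻ t in Set.Icc (0:ℝ) T, sobNormSq 1 (f t)) ^ (1 / 2 : ℝ)

/-- A measurable periodic path, bounded in `L^∞([0,T]×𝕋^d)`. -/
def BddClass {d : ℕ} (T : ℝ) (f : ℝ → (Fin d → ℝ) → ℝ) : Prop :=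
  Measurable (Function.uncurry f) ∧ (∀ t, ZPeriodic (f t)) ∧ LqLp T ∞ ∞ f < ∞

/-- Membership in `L^∞_t L²_x ∩ L²_t H¹_x` (with a weak spatial gradient). -/
def SolClassL2 {d : ℕ} (T : ℝ) (f : ℝ → (Fin d → ℝ) → ℝ) : Prop :=
  Measurable (Function.uncurry f) ∧ (∀ t, ZPeriodic (f t)) ∧ supLp T 2 f < ∞ ∧
  ∃ g : ℝ → (Fin d → ℝ) → Fin d → ℝ,
    (∀ t ∈ Set.Icc (0:ℝ) T, HasWeakGrad (f t) (g t)) ∧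
    (∫⁻ t in Set.Icc (0:ℝ) T, (spLp 2 (f t) ^ 2 + spLpV 2 (g t) ^ 2)) < ∞

end GaleatiLuo
namespace GaleatiLuo

/-- Squared `H^s(𝕋²)` norm of a distribution given by its Fourier coefficients. -/
def coefSobSq (s : ℝ) (a : (Fin 2 → ℤ) → ℂ) : ℝ≥0∞ :=
  ∑' k : Fin 2 → ℤ, ENNReal.ofReal ((1 + znorm k ^ 2) ^ s) * (‖a k‖₊ : ℝ≥0∞) ^ 2

/-- `H^s` norm of a coefficient sequence. -/
def coefSobNorm (s : ℝ) (a : (Fin 2 → ℤ) → ℂ) : ℝ≥0∞ := coefSobSq s a ^ (1 / 2 : ℝ)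

/-- `k`-th Fourier coefficient of `V·∇f = div(Vf)`, where `f` is a distribution given
by its Fourier coefficients and `(Vf)_i` is defined by duality `⟨(Vf)_i, φ⟩ = ⟨f, V_iφ⟩`:
`(div(Vf))^(k) = 2πi Σ_i k_i Σ_l f(l) V̂_i(k−l)`. -/
def prodDivCoef (V : (Fin 2 → ℝ) → Fin 2 → ℝ) (f : (Fin 2 → ℤ) → ℂ)
    (k : Fin 2 → ℤ) : ℂ :=
  (2 * (Real.pi : ℂ) * Complex.I) *
    ∑ i : Fin 2, (k i : ℂ) * ∑' l : Fin 2 → ℤ, f l * fc (fun x => V x i) (k - l)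

def wgt (k : Fin 2 → ℤ) : ℝ := 1 + znorm k ^ 2

lemma znorm_sq {d : ℕ} (k : Fin d → ℤ) : znorm k ^ 2 = ∑ i, ((k i : ℝ)) ^ 2 :=
  Real.sq_sqrt (Finset.sum_nonneg fun _ _ => sq_nonneg _)

lemma wgt_eq (k : Fin 2 → ℤ) : wgt k = 1 + ((k 0 : ℝ))^2 + ((k 1 : ℝ))^2 := by
  rw [wgt, znorm_sq, Fin.sum_univ_two]; ring

lemma one_le_wgt (k : Fin 2 → ℤ) : 1 ≤ wgt k := by
  rw [wgt_eq]; nlinarith [sq_nonneg ((k 0 : ℝ)), sq_nonneg ((k 1 : ℝ))]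

lemma wgt_pos (k : Fin 2 → ℤ) : 0 < wgt k := lt_of_lt_of_le one_pos (one_le_wgt k)

lemma wgt_convolution (k l : Fin 2 → ℤ) : wgt l ≤ 2 * wgt k * wgt (k - l) := by
  have h0 : ((k - l) 0 : ℝ) = (k 0 : ℝ) - (l 0 : ℝ) := by push_cast [Pi.sub_apply]; ring
  have h1 : ((k - l) 1 : ℝ) = (k 1 : ℝ) - (l 1 : ℝ) := by push_cast [Pi.sub_apply]; ring
  rw [wgt_eq, wgt_eq, wgt_eq, h0, h1]
  nlinarith [sq_nonneg (2*(k 0:ℝ) - (l 0:ℝ)), sq_nonneg (2*(k 1:ℝ) - (l 1:ℝ)),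
    mul_nonneg (add_nonneg (sq_nonneg ((k 0:ℝ))) (sq_nonneg ((k 1:ℝ))))
      (add_nonneg (sq_nonneg ((k 0:ℝ) - (l 0:ℝ))) (sq_nonneg ((k 1:ℝ) - (l 1:ℝ))))]

/-- Cauchy–Schwarz for tsums of nonnegative reals. -/
lemma tsum_CS {ι : Type*} {u v : ι → ℝ} (hu0 : ∀ i, 0 ≤ u i) (hv0 : ∀ i, 0 ≤ v i)
    (hu : Summable (fun i => u i ^ 2)) (hv : Summable (fun i => v i ^ 2)) :
    Summable (fun i => u i * v i) ∧
      ∑' i, u i * v i ≤ Real.sqrt (∑' i, u i ^ 2) * Real.sqrt (∑' i, v i ^ 2) := by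
  have hs : Summable (fun i => u i * v i) := by
    refine Summable.of_nonneg_of_le (fun i => mul_nonneg (hu0 i) (hv0 i)) (fun i => ?_)
      (((hu.add hv).mul_left (1/2)))
    nlinarith [sq_nonneg (u i - v i)]
  refine ⟨hs, Summable.tsum_le_of_sum_le hs fun s => ?_⟩
  calc ∑ i ∈ s, u i * v i
      ≤ Real.sqrt (∑ i ∈ s, u i ^ 2) * Real.sqrt (∑ i ∈ s, v i ^ 2) :=
        Real.sum_mul_le_sqrt_mul_sqrt s u v
    _ ≤ Real.sqrt (∑' i, u i ^ 2) * Real.sqrt (∑' i, v i ^ 2) := by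
        apply mul_le_mul (Real.sqrt_le_sqrt (Summable.sum_le_tsum s (fun i _ => sq_nonneg _) hu))
          (Real.sqrt_le_sqrt (Summable.sum_le_tsum s (fun i _ => sq_nonneg _) hv))
          (Real.sqrt_nonneg _) (Real.sqrt_nonneg _)

lemma summable_of_ofReal_tsum_ne_top {ι : Type*} {h : ι → ℝ} (h0 : ∀ i, 0 ≤ h i)
    (hfin : ∑' i, ENNReal.ofReal (h i) ≠ ∞) : Summable h := by
  have h1 : Summable (fun i => Real.toNNReal (h i)) := by
    apply ENNReal.tsum_coe_ne_top_iff_summable.mp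
    simpa [ENNReal.ofReal] using hfin
  exact (NNReal.summable_coe.2 h1).congr fun i => Real.coe_toNNReal _ (h0 i)

lemma summable_wgt_rpow {ε : ℝ} (hε : 0 < ε) :
    Summable (fun k : Fin 2 → ℤ => wgt k ^ (-1 - ε)) := by
  set g : ℤ → ℝ := fun n => (1 + (n : ℝ) ^ 2) ^ (-(1 + ε) / 2) with hg
  have hgpos : ∀ n : ℤ, 0 < 1 + (n:ℝ)^2 := fun n => by positivity
  have hgsum : Summable g := by
    have h1 : Summable (fun n : ℤ => |(n : ℝ)| ^ (-(1 + ε))) :=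
      Real.summable_abs_int_rpow (by linarith)
    have h2 : Summable (fun n : ℤ => if n = 0 then (1:ℝ) else 0) :=
      summable_of_ne_finset_zero (s := {0}) (fun n hn => if_neg (by simpa using hn))
    refine Summable.of_nonneg_of_le (fun n => (Real.rpow_nonneg (hgpos n).le _))
      (fun n => ?_) (h2.add h1)
    by_cases hn : n = 0
    · subst hn
      have hne : -(1+ε) ≠ 0 := ne_of_lt (by linarith)
      simp only [hg, Int.cast_zero, ne_eq, OfNat.ofNat_ne_zero, not_false_eq_true,
        zero_pow, add_zero, Real.one_rpow, abs_zero, if_true]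
      have : (0:ℝ) ^ (-(1+ε)) = 0 := Real.zero_rpow hne
      nlinarith [Real.rpow_nonneg (le_refl (0:ℝ)) (-(1+ε))]
    · have hn' : (0:ℝ) < (n:ℝ)^2 := by
        have : (n:ℝ) ≠ 0 := Int.cast_ne_zero.2 hn
        positivity
      have : g n ≤ ((n:ℝ)^2) ^ (-(1 + ε) / 2) := by
        apply Real.rpow_le_rpow_of_nonpos hn' (by linarith) (by linarith [hε.le] : -(1+ε)/2 ≤ 0)
      calc g n ≤ ((n:ℝ)^2) ^ (-(1 + ε) / 2) := this
        _ = |(n:ℝ)| ^ (-(1 + ε)) := by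
            rw [← sq_abs, ← Real.rpow_natCast |(n:ℝ)| 2, ← Real.rpow_mul (abs_nonneg _)]
            congr 1; ring
        _ ≤ _ := by simp [hn]
  have hprod : Summable (fun p : ℤ × ℤ => g p.1 * g p.2) :=
    hgsum.mul_of_nonneg hgsum (fun n => Real.rpow_nonneg (hgpos n).le _)
      (fun n => Real.rpow_nonneg (hgpos n).le _)
  have hcomp : Summable (fun k : Fin 2 → ℤ => g (k 0) * g (k 1)) := by
    have := (Equiv.summable_iff (piFinTwoEquiv fun _ => ℤ)).2 hprod
    exact this
  refine Summable.of_nonneg_of_le (fun k => Real.rpow_nonneg (wgt_pos k).le _) (fun k => ?_) hcomp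
  have hsq : (1 + ((k 0:ℝ))^2) * (1 + ((k 1:ℝ))^2) ≤ wgt k ^ 2 := by
    rw [wgt_eq]; nlinarith [sq_nonneg ((k 0:ℝ)), sq_nonneg ((k 1:ℝ)),
      mul_nonneg (sq_nonneg ((k 0:ℝ))) (sq_nonneg ((k 1:ℝ)))]
  calc wgt k ^ (-1 - ε) = (wgt k ^ 2) ^ (-(1 + ε) / 2) := by
        rw [← Real.rpow_natCast (wgt k) 2, ← Real.rpow_mul (wgt_pos k).le]
        congr 1; ring
    _ ≤ ((1 + ((k 0:ℝ))^2) * (1 + ((k 1:ℝ))^2)) ^ (-(1 + ε) / 2) := by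
        apply Real.rpow_le_rpow_of_nonpos (by positivity) hsq (by linarith [hε.le] : -(1+ε)/2 ≤ 0)
    _ = g (k 0) * g (k 1) := Real.mul_rpow (hgpos _).le (hgpos _).le


lemma coef_term (s : ℝ) (k : Fin 2 → ℤ) (c : ℂ) :
    ENNReal.ofReal ((1 + znorm k ^ 2) ^ s) * (‖c‖₊ : ℝ≥0∞) ^ 2
      = ENNReal.ofReal (wgt k ^ s * ‖c‖ ^ 2) := by
  rw [show ((‖c‖₊ : ℝ≥0∞)) = ENNReal.ofReal ‖c‖ from (ofReal_norm_eq_enorm c).symm, ← ENNReal.ofReal_pow (norm_nonneg _),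
    show (1 + znorm k ^ 2) = wgt k from rfl,
    ← ENNReal.ofReal_mul (Real.rpow_nonneg (wgt_pos k).le s)]

lemma coefSobSq_ofReal (s : ℝ) (c : (Fin 2 → ℤ) → ℂ) :
    coefSobSq s c = ∑' k, ENNReal.ofReal (wgt k ^ s * ‖c k‖ ^ 2) :=
  tsum_congr fun k => coef_term s k (c k)

lemma coef_nonneg (s : ℝ) (k : Fin 2 → ℤ) (c : ℂ) : 0 ≤ wgt k ^ s * ‖c‖ ^ 2 :=
  mul_nonneg (Real.rpow_nonneg (wgt_pos k).le s) (pow_nonneg (norm_nonneg _) 2)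

lemma conv_bound {a b : ℝ} (hb : 0 < b) (hba : b ≤ a)
    {f : (Fin 2 → ℤ) → ℂ} {g : (Fin 2 → ℤ) → ℂ}
    (hf : Summable fun l => wgt l ^ (-b) * ‖f l‖ ^ 2)
    (hg : Summable fun m => wgt m ^ a * ‖g m‖ ^ 2) (k : Fin 2 → ℤ) :
    Summable (fun l => ‖f l * g (k - l)‖) ∧
    ∑' l, ‖f l * g (k - l)‖ ≤
      Real.sqrt (∑' l, wgt l ^ (-b) * ‖f l‖ ^ 2) *
      Real.sqrt (2 ^ b * wgt k ^ b * ∑' m, wgt m ^ a * ‖g m‖ ^ 2) := by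
  set u : (Fin 2 → ℤ) → ℝ := fun l => Real.sqrt (wgt l ^ (-b)) * ‖f l‖ with hu
  set v : (Fin 2 → ℤ) → ℝ := fun l => Real.sqrt (wgt l ^ b) * ‖g (k - l)‖ with hv
  have hu0 : ∀ l, 0 ≤ u l := fun l => mul_nonneg (Real.sqrt_nonneg _) (norm_nonneg _)
  have hv0 : ∀ l, 0 ≤ v l := fun l => mul_nonneg (Real.sqrt_nonneg _) (norm_nonneg _)
  have hu2 : ∀ l, u l ^ 2 = wgt l ^ (-b) * ‖f l‖ ^ 2 := fun l => by
    rw [hu, mul_pow, Real.sq_sqrt (Real.rpow_nonneg (wgt_pos l).le _)]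
  have hv2 : ∀ l, v l ^ 2 = wgt l ^ b * ‖g (k - l)‖ ^ 2 := fun l => by
    rw [hv, mul_pow, Real.sq_sqrt (Real.rpow_nonneg (wgt_pos l).le _)]
  have huv : ∀ l, u l * v l = ‖f l * g (k - l)‖ := fun l => by
    rw [norm_mul]
    have h1 : Real.sqrt (wgt l ^ (-b)) * Real.sqrt (wgt l ^ b) = 1 := by
      rw [← Real.sqrt_mul (Real.rpow_nonneg (wgt_pos l).le _), ← Real.rpow_add (wgt_pos l)]
      simp
    calc u l * v l
        = (Real.sqrt (wgt l ^ (-b)) * Real.sqrt (wgt l ^ b)) * (‖f l‖ * ‖g (k - l)‖) := by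
          rw [hu, hv]; ring
      _ = ‖f l‖ * ‖g (k - l)‖ := by rw [h1, one_mul]
  have hvbound : ∀ l, v l ^ 2 ≤ 2 ^ b * wgt k ^ b * (wgt (k - l) ^ a * ‖g (k - l)‖ ^ 2) := by
    intro l
    rw [hv2]
    have h1 : wgt l ^ b ≤ 2 ^ b * wgt k ^ b * wgt (k - l) ^ a := by
      calc wgt l ^ b ≤ (2 * wgt k * wgt (k - l)) ^ b :=
          Real.rpow_le_rpow (wgt_pos l).le (wgt_convolution k l) hb.le
        _ = 2 ^ b * wgt k ^ b * wgt (k - l) ^ b := by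
            rw [Real.mul_rpow (mul_pos two_pos (wgt_pos k)).le (wgt_pos _).le,
              Real.mul_rpow (by norm_num) (wgt_pos _).le]
        _ ≤ 2 ^ b * wgt k ^ b * wgt (k - l) ^ a := by
            have h2 := Real.rpow_le_rpow_of_exponent_le (one_le_wgt (k - l)) hba
            have h3 : (0:ℝ) ≤ 2 ^ b * wgt k ^ b :=
              mul_nonneg (Real.rpow_nonneg (by norm_num) _) (Real.rpow_nonneg (wgt_pos k).le _)
            exact mul_le_mul_of_nonneg_left h2 h3
    calc wgt l ^ b * ‖g (k - l)‖ ^ 2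
        ≤ (2 ^ b * wgt k ^ b * wgt (k - l) ^ a) * ‖g (k - l)‖ ^ 2 :=
          mul_le_mul_of_nonneg_right h1 (sq_nonneg _)
      _ = 2 ^ b * wgt k ^ b * (wgt (k - l) ^ a * ‖g (k - l)‖ ^ 2) := by ring
  have hgshift : Summable (fun l => wgt (k - l) ^ a * ‖g (k - l)‖ ^ 2) :=
    hg.comp_injective (Equiv.subLeft k).injective
  have husum : Summable (fun l => u l ^ 2) := hf.congr fun l => (hu2 l).symm
  have hvsum : Summable (fun l => v l ^ 2) :=
    Summable.of_nonneg_of_le (fun l => sq_nonneg _) hvbound (hgshift.mul_left _)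
  obtain ⟨hsuv, hle⟩ := tsum_CS hu0 hv0 husum hvsum
  constructor
  · exact hsuv.congr huv
  · have e1 : ∑' l, ‖f l * g (k - l)‖ = ∑' l, u l * v l := tsum_congr fun l => (huv l).symm
    have e2 : ∑' l, u l ^ 2 = ∑' l, wgt l ^ (-b) * ‖f l‖ ^ 2 := tsum_congr hu2
    have e3 : ∑' l, v l ^ 2 ≤ 2 ^ b * wgt k ^ b * ∑' m, wgt m ^ a * ‖g m‖ ^ 2 := by
      have h4 := Summable.tsum_le_tsum hvbound hvsum (hgshift.mul_left _)
      have e5 : ∑' x : Fin 2 → ℤ, wgt (k - x) ^ a * ‖g (k - x)‖ ^ 2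
          = ∑' m, wgt m ^ a * ‖g m‖ ^ 2 := by
        simpa using (Equiv.subLeft k).tsum_eq (fun m => wgt m ^ a * ‖g m‖ ^ 2)
      rwa [tsum_mul_left, e5] at h4
    rw [e1]
    refine hle.trans ?_
    rw [e2]
    exact mul_le_mul_of_nonneg_left (Real.sqrt_le_sqrt e3) (Real.sqrt_nonneg _)


/-- For `0 < b ≤ a < 1` and `ε > 0` there is `C = C(a,b,ε)` such that
for every divergence-free `V ∈ H^a(𝕋²;ℝ²)` and `f ∈ H^{−b}(𝕋²)`, the convolution sums
defining `V·∇f = div(Vf)` converge absolutely and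
`‖V·∇f‖_{H^{−2−b−ε}} ≤ C ‖V‖_{H^a} ‖f‖_{H^{−b}}`. -/
theorem statement12 (a b ε : ℝ) (hb : 0 < b) (hba : b ≤ a) (ha : a < 1) (hε : 0 < ε) :
    ∃ C : ℝ, 0 < C ∧
      ∀ V : (Fin 2 → ℝ) → Fin 2 → ℝ,
        Measurable V → ZPeriodicV V →
        (∀ i, MeasureTheory.Integrable (fun x => V x i) (μT 2)) →
        IsWeakDiv V (fun _ => 0) →
        sobNormSqV a V < ∞ →
        ∀ f : (Fin 2 → ℤ) → ℂ,
          (∀ k, f (-k) = star (f k)) → coefSobSq (-b) f < ∞ →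
          (∀ (k : Fin 2 → ℤ) (i : Fin 2),
            Summable (fun l : Fin 2 → ℤ => ‖f l * fc (fun x => V x i) (k - l)‖)) ∧
          coefSobNorm (-2 - b - ε) (prodDivCoef V f)
            ≤ ENNReal.ofReal C * (sobNormSqV a V) ^ (1/2 : ℝ)
              * (coefSobSq (-b) f) ^ (1/2 : ℝ) := by
  have hK : Summable (fun k : Fin 2 → ℤ => wgt k ^ (-1 - ε)) := summable_wgt_rpow hε
  set Kt : ℝ := ∑' k : Fin 2 → ℤ, wgt k ^ (-1 - ε) with hKt
  have hKt0 : 0 ≤ Kt := tsum_nonneg fun k => Real.rpow_nonneg (wgt_pos k).le _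
  set C0 : ℝ := 4 * Real.pi * Real.sqrt (2 ^ b) with hC0
  have hC00 : 0 ≤ C0 := by positivity
  refine ⟨C0 * Real.sqrt Kt + 1, by positivity, ?_⟩
  intro V _ _ _ _ hVfin f _ hffin
  set G : Fin 2 → (Fin 2 → ℤ) → ℂ := fun i k => fc (fun x => V x i) k with hG
  set Sfr : ℝ := ∑' l, wgt l ^ (-b) * ‖f l‖ ^ 2 with hSfr
  set Tr : Fin 2 → ℝ := fun i => ∑' m, wgt m ^ a * ‖G i m‖ ^ 2 with hTr
  have hSf : Summable (fun l => wgt l ^ (-b) * ‖f l‖ ^ 2) :=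
    summable_of_ofReal_tsum_ne_top (fun l => coef_nonneg _ _ _)
      (by rw [← coefSobSq_ofReal]; exact hffin.ne)
  have hTi : ∀ i, Summable (fun m => wgt m ^ a * ‖G i m‖ ^ 2) := by
    intro i
    refine summable_of_ofReal_tsum_ne_top (fun m => coef_nonneg _ _ _) ?_
    rw [← coefSobSq_ofReal]
    have hle : coefSobSq a (G i) ≤ sobNormSqV a V := by
      have he : coefSobSq a (G i) = sobNormSq a (fun x => V x i) := rfl
      rw [he, sobNormSqV]
      exact Finset.single_le_sum (f := fun j => sobNormSq a (fun x => V x j))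
        (fun _ _ => zero_le) (Finset.mem_univ i)
    exact (lt_of_le_of_lt hle hVfin).ne
  have key := fun (k : Fin 2 → ℤ) (i : Fin 2) => conv_bound hb hba hSf (hTi i) k
  refine ⟨fun k i => (key k i).1, ?_⟩
  have hSfr0 : 0 ≤ Sfr := tsum_nonneg fun l => coef_nonneg (-b) l (f l)
  have hTr0 : ∀ i, 0 ≤ Tr i := fun i => tsum_nonneg fun m => coef_nonneg a m (G i m)
  set TV : ℝ := Tr 0 + Tr 1 with hTV
  have hTV0 : 0 ≤ TV := add_nonneg (hTr0 0) (hTr0 1)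
  -- pointwise bound on the Fourier coefficients of div(Vf)
  have hpdc : ∀ k, ‖prodDivCoef V f k‖ ≤
      C0 * Real.sqrt (wgt k) * Real.sqrt (wgt k ^ b) * Real.sqrt Sfr * Real.sqrt TV := by
    intro k
    set Sc : Fin 2 → ℂ := fun i => ∑' l, f l * G i (k - l) with hSc
    have hnorm2pi : ‖(2 * (Real.pi : ℂ) * Complex.I)‖ = 2 * Real.pi := by
      simp [norm_mul, Complex.norm_I, Complex.norm_real, Real.norm_eq_abs,
        abs_of_nonneg Real.pi_pos.le]
    have hSnorm : ∀ i, ‖Sc i‖ ≤ ∑' l, ‖f l * G i (k - l)‖ :=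
      fun i => norm_tsum_le_tsum_norm (key k i).1
    have habs : ∀ i : Fin 2, |((k i : ℝ))| ≤ Real.sqrt (wgt k) := by
      intro i
      rw [← Real.sqrt_sq_eq_abs]
      apply Real.sqrt_le_sqrt
      have h1 : ((k i : ℝ)) ^ 2 ≤ znorm k ^ 2 := by
        rw [znorm_sq]
        exact Finset.single_le_sum (f := fun j => ((k j : ℝ)) ^ 2)
          (fun _ _ => sq_nonneg _) (Finset.mem_univ i)
      have h2 : wgt k = 1 + znorm k ^ 2 := rfl
      linarith
    have hkc : ∀ i : Fin 2, ‖((k i : ℤ) : ℂ)‖ = |((k i : ℝ))| := by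
      intro i
      have h : ((k i : ℤ) : ℂ) = (((k i : ℤ) : ℝ) : ℂ) := by push_cast; ring
      rw [h, Complex.norm_real, Real.norm_eq_abs]
    have hTrle : ∀ i : Fin 2, Real.sqrt (Tr i) ≤ Real.sqrt TV := by
      have h0 : Real.sqrt (Tr 0) ≤ Real.sqrt TV :=
        Real.sqrt_le_sqrt (by rw [hTV]; linarith [hTr0 1])
      have h1 : Real.sqrt (Tr 1) ≤ Real.sqrt TV :=
        Real.sqrt_le_sqrt (by rw [hTV]; linarith [hTr0 0])
      intro i
      fin_cases i
      · exact h0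
      · exact h1
    have hScbound : ∀ i, ‖Sc i‖ ≤
        Real.sqrt Sfr * (Real.sqrt (2 ^ b) * Real.sqrt (wgt k ^ b) * Real.sqrt TV) := by
      intro i
      refine (hSnorm i).trans ((key k i).2.trans ?_)
      have he : Real.sqrt (2 ^ b * wgt k ^ b * ∑' m, wgt m ^ a * ‖G i m‖ ^ 2)
          = Real.sqrt (2 ^ b) * Real.sqrt (wgt k ^ b) * Real.sqrt (Tr i) := by
        rw [Real.sqrt_mul (mul_nonneg (Real.rpow_nonneg (by norm_num) b)
            (Real.rpow_nonneg (wgt_pos k).le b)) _,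
          Real.sqrt_mul (Real.rpow_nonneg (by norm_num) b)]
      rw [he]
      have := hTrle i
      gcongr
    have hexp : prodDivCoef V f k = (2 * (Real.pi : ℂ) * Complex.I) *
        ∑ i : Fin 2, ((k i : ℤ) : ℂ) * Sc i := rfl
    have hB0 : (0:ℝ) ≤ Real.sqrt Sfr * (Real.sqrt (2 ^ b) * Real.sqrt (wgt k ^ b)
        * Real.sqrt TV) := by positivity
    calc ‖prodDivCoef V f k‖
        = 2 * Real.pi * ‖∑ i : Fin 2, ((k i : ℤ) : ℂ) * Sc i‖ := by
          rw [hexp, norm_mul, hnorm2pi]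
      _ ≤ 2 * Real.pi * (|((k 0 : ℝ))| * ‖Sc 0‖ + |((k 1 : ℝ))| * ‖Sc 1‖) := by
          have h := norm_add_le (((k 0 : ℤ) : ℂ) * Sc 0) (((k 1 : ℤ) : ℂ) * Sc 1)
          rw [Fin.sum_univ_two]
          have h2 : ‖((k 0 : ℤ) : ℂ) * Sc 0 + ((k 1 : ℤ) : ℂ) * Sc 1‖
              ≤ |((k 0 : ℝ))| * ‖Sc 0‖ + |((k 1 : ℝ))| * ‖Sc 1‖ := by
            refine h.trans ?_
            rw [norm_mul, norm_mul, hkc 0, hkc 1]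
          have hpi : (0:ℝ) ≤ 2 * Real.pi := by positivity
          exact mul_le_mul_of_nonneg_left h2 hpi
      _ ≤ 2 * Real.pi * (Real.sqrt (wgt k) * (Real.sqrt Sfr * (Real.sqrt (2 ^ b)
            * Real.sqrt (wgt k ^ b) * Real.sqrt TV))
          + Real.sqrt (wgt k) * (Real.sqrt Sfr * (Real.sqrt (2 ^ b)
            * Real.sqrt (wgt k ^ b) * Real.sqrt TV))) := by
          have hpi : (0:ℝ) ≤ 2 * Real.pi := by positivity
          refine mul_le_mul_of_nonneg_left (add_le_add ?_ ?_) hpi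
          · exact mul_le_mul (habs 0) (hScbound 0) (norm_nonneg _) (Real.sqrt_nonneg _)
          · exact mul_le_mul (habs 1) (hScbound 1) (norm_nonneg _) (Real.sqrt_nonneg _)
      _ = C0 * Real.sqrt (wgt k) * Real.sqrt (wgt k ^ b) * Real.sqrt Sfr * Real.sqrt TV := by
          rw [hC0]; ring
  -- summing up in ℝ≥0∞
  have hmain : coefSobSq (-2 - b - ε) (prodDivCoef V f)
      ≤ ENNReal.ofReal (C0 ^ 2 * Sfr * TV * Kt) := by
    rw [coefSobSq_ofReal]
    have hterm : ∀ k, ENNReal.ofReal (wgt k ^ (-2 - b - ε) * ‖prodDivCoef V f k‖ ^ 2)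
        ≤ ENNReal.ofReal ((C0 ^ 2 * Sfr * TV) * wgt k ^ (-1 - ε)) := by
      intro k
      apply ENNReal.ofReal_le_ofReal
      have h1 : ‖prodDivCoef V f k‖ ^ 2 ≤ C0 ^ 2 * (wgt k * wgt k ^ b) * Sfr * TV := by
        have h3 : (C0 * Real.sqrt (wgt k) * Real.sqrt (wgt k ^ b) * Real.sqrt Sfr
              * Real.sqrt TV) ^ 2 = C0 ^ 2 * (wgt k * wgt k ^ b) * Sfr * TV := by
          rw [mul_pow, mul_pow, mul_pow, mul_pow,
            Real.sq_sqrt (wgt_pos k).le, Real.sq_sqrt (Real.rpow_nonneg (wgt_pos k).le b),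
            Real.sq_sqrt hSfr0, Real.sq_sqrt hTV0]
          ring
        calc ‖prodDivCoef V f k‖ ^ 2
            ≤ (C0 * Real.sqrt (wgt k) * Real.sqrt (wgt k ^ b) * Real.sqrt Sfr
              * Real.sqrt TV) ^ 2 := pow_le_pow_left₀ (norm_nonneg _) (hpdc k) 2
          _ = _ := h3
      have h4 : wgt k ^ (-2 - b - ε) * (wgt k * wgt k ^ b) = wgt k ^ (-1 - ε) := by
        rw [show wgt k * wgt k ^ b = wgt k ^ (1 + b) by
            rw [Real.rpow_add (wgt_pos k), Real.rpow_one],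
          ← Real.rpow_add (wgt_pos k)]
        congr 1; ring
      calc wgt k ^ (-2 - b - ε) * ‖prodDivCoef V f k‖ ^ 2
          ≤ wgt k ^ (-2 - b - ε) * (C0 ^ 2 * (wgt k * wgt k ^ b) * Sfr * TV) :=
            mul_le_mul_of_nonneg_left h1 (Real.rpow_nonneg (wgt_pos k).le _)
        _ = (C0 ^ 2 * Sfr * TV) * wgt k ^ (-1 - ε) := by rw [← h4]; ring
    calc ∑' k, ENNReal.ofReal (wgt k ^ (-2 - b - ε) * ‖prodDivCoef V f k‖ ^ 2)
        ≤ ∑' k, ENNReal.ofReal ((C0 ^ 2 * Sfr * TV) * wgt k ^ (-1 - ε)) :=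
          ENNReal.tsum_le_tsum hterm
      _ = ENNReal.ofReal (C0 ^ 2 * Sfr * TV) * ∑' k, ENNReal.ofReal (wgt k ^ (-1 - ε)) := by
          rw [← ENNReal.tsum_mul_left]
          exact tsum_congr fun k => ENNReal.ofReal_mul (by positivity)
      _ = ENNReal.ofReal (C0 ^ 2 * Sfr * TV) * ENNReal.ofReal Kt := by
          rw [← ENNReal.ofReal_tsum_of_nonneg (fun k => Real.rpow_nonneg (wgt_pos k).le _) hK]
      _ = ENNReal.ofReal (C0 ^ 2 * Sfr * TV * Kt) :=
          (ENNReal.ofReal_mul (by positivity)).symm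
  have hVeq : sobNormSqV a V = ENNReal.ofReal TV := by
    rw [sobNormSqV, Fin.sum_univ_two]
    have e0 : sobNormSq a (fun x => V x 0) = ENNReal.ofReal (Tr 0) := by
      rw [show sobNormSq a (fun x => V x 0) = coefSobSq a (G 0) from rfl, coefSobSq_ofReal,
        ← ENNReal.ofReal_tsum_of_nonneg (fun m => coef_nonneg _ _ _) (hTi 0)]
    have e1 : sobNormSq a (fun x => V x 1) = ENNReal.ofReal (Tr 1) := by
      rw [show sobNormSq a (fun x => V x 1) = coefSobSq a (G 1) from rfl, coefSobSq_ofReal,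
        ← ENNReal.ofReal_tsum_of_nonneg (fun m => coef_nonneg _ _ _) (hTi 1)]
    rw [e0, e1, ← ENNReal.ofReal_add (hTr0 0) (hTr0 1)]
  have hfeq : coefSobSq (-b) f = ENNReal.ofReal Sfr := by
    rw [coefSobSq_ofReal, ← ENNReal.ofReal_tsum_of_nonneg (fun l => coef_nonneg _ _ _) hSf]
  rw [hVeq, hfeq]
  have h12 : (0:ℝ) ≤ 1 / 2 := by norm_num
  have hreal : (C0 ^ 2 * Sfr * TV * Kt) ^ ((1:ℝ) / 2)
      ≤ (C0 * Real.sqrt Kt + 1) * TV ^ ((1:ℝ) / 2) * Sfr ^ ((1:ℝ) / 2) := by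
    rw [← Real.sqrt_eq_rpow, ← Real.sqrt_eq_rpow, ← Real.sqrt_eq_rpow,
      Real.sqrt_mul (by positivity) Kt, Real.sqrt_mul (by positivity) TV,
      Real.sqrt_mul (by positivity) Sfr, Real.sqrt_sq hC00]
    nlinarith [Real.sqrt_nonneg Kt, Real.sqrt_nonneg TV, Real.sqrt_nonneg Sfr,
      mul_nonneg (Real.sqrt_nonneg TV) (Real.sqrt_nonneg Sfr),
      mul_nonneg (mul_nonneg hC00 (Real.sqrt_nonneg Kt))
        (mul_nonneg (Real.sqrt_nonneg TV) (Real.sqrt_nonneg Sfr))]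
  calc coefSobNorm (-2 - b - ε) (prodDivCoef V f)
      = coefSobSq (-2 - b - ε) (prodDivCoef V f) ^ ((1:ℝ) / 2) := rfl
    _ ≤ (ENNReal.ofReal (C0 ^ 2 * Sfr * TV * Kt)) ^ ((1:ℝ) / 2) :=
        ENNReal.rpow_le_rpow hmain h12
    _ = ENNReal.ofReal ((C0 ^ 2 * Sfr * TV * Kt) ^ ((1:ℝ) / 2)) :=
        ENNReal.ofReal_rpow_of_nonneg (by positivity) h12
    _ ≤ ENNReal.ofReal ((C0 * Real.sqrt Kt + 1) * TV ^ ((1:ℝ) / 2) * Sfr ^ ((1:ℝ) / 2)) :=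
        ENNReal.ofReal_le_ofReal hreal
    _ = ENNReal.ofReal (C0 * Real.sqrt Kt + 1) * ENNReal.ofReal TV ^ ((1:ℝ) / 2)
        * ENNReal.ofReal Sfr ^ ((1:ℝ) / 2) := by
        rw [ENNReal.ofReal_mul (by positivity), ENNReal.ofReal_mul (by positivity),
          ENNReal.ofReal_rpow_of_nonneg hTV0 h12, ENNReal.ofReal_rpow_of_nonneg hSfr0 h12]


end GaleatiLuo
end
end

section
/- Let d ≥ 1, let a, b > 0 with a + b > d, and let δ ∈ (0, min(a, b, a+b−d)). Then there exists a constant C = C(a, b, δ, d) such that for every j ∈ ℤ^d∖{0}: Σ_{l ∈ ℤ^d, l ≠ 0, l ≠ j} |l|^{−a} |j−l|^{−b} ≤ C |j|^{−δ}, where |·| denotes the Euclidean norm on ℝ^d. -/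
open MeasureTheory Filter
open scoped ENNReal NNReal

noncomputable section

namespace GaleatiLuo

lemma znorm_nonneg {d : ℕ} (k : Fin d → ℤ) : 0 ≤ znorm k := Real.sqrt_nonneg _

lemma abs_coord_le_znorm {d : ℕ} (k : Fin d → ℤ) (i : Fin d) : |(k i : ℝ)| ≤ znorm k := by
  rw [← Real.sqrt_sq_eq_abs]
  exact Real.sqrt_le_sqrt (Finset.single_le_sum (fun j _ => sq_nonneg ((k j : ℝ))) (Finset.mem_univ i))

lemma one_le_znorm {d : ℕ} {k : Fin d → ℤ} (hk : k ≠ 0) : 1 ≤ znorm k := by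
  obtain ⟨i, hi⟩ := Function.ne_iff.mp hk
  have h1 : (1:ℝ) ≤ |(k i : ℝ)| := by
    rw [← Int.cast_abs]
    exact_mod_cast Int.one_le_abs hi
  exact h1.trans (abs_coord_le_znorm k i)

lemma znorm_triangle {d : ℕ} (j l : Fin d → ℤ) : znorm j ≤ znorm l + znorm (j - l) := by
  have e : ∀ m : Fin d → ℤ,
      znorm m = ‖(WithLp.equiv 2 (Fin d → ℝ)).symm (fun i => (m i : ℝ))‖ := by
    intro m
    rw [EuclideanSpace.norm_eq]
    unfold znorm
    congr 1
    refine Finset.sum_congr rfl fun i _ => ?_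
    rw [WithLp.equiv_symm_apply, PiLp.toLp_apply, Real.norm_eq_abs, sq_abs]
  rw [e, e, e]
  have h : (WithLp.equiv 2 (Fin d → ℝ)).symm (fun i => (j i : ℝ))
      = (WithLp.equiv 2 (Fin d → ℝ)).symm (fun i => (l i : ℝ))
        + (WithLp.equiv 2 (Fin d → ℝ)).symm (fun i => ((j - l) i : ℝ)) := by
    rw [WithLp.equiv_symm_apply, ← WithLp.toLp_add]
    congr 1
    funext i
    rw [Pi.add_apply, Pi.sub_apply]
    push_cast
    ring
  rw [h]
  exact norm_add_le _ _

lemma aux_rpow {x y J u v δ : ℝ} (hx : 0 < x) (hxy : x ≤ y) (hJ : 0 < J) (hJy : J ≤ 2 * y)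
    (hδ0 : 0 < δ) (hδv : δ ≤ v) :
    x ^ (-u) * y ^ (-v) ≤ 2 ^ δ * J ^ (-δ) * x ^ (-(u + v - δ)) := by
  have hy : 0 < y := hx.trans_le hxy
  have h1 : y ^ (-v) = y ^ (-(v - δ)) * y ^ (-δ) := by
    rw [← Real.rpow_add hy]; congr 1; ring
  have h2 : y ^ (-(v - δ)) ≤ x ^ (-(v - δ)) :=
    Real.rpow_le_rpow_of_nonpos hx hxy (by linarith)
  have h3 : y ^ (-δ) ≤ (J / 2) ^ (-δ) :=
    Real.rpow_le_rpow_of_nonpos (by linarith) (by linarith) (by linarith)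
  have h4 : (J / 2) ^ (-δ) = 2 ^ δ * J ^ (-δ) := by
    rw [Real.div_rpow hJ.le (by norm_num), Real.rpow_neg (by norm_num : (0:ℝ) ≤ 2),
      div_eq_mul_inv, inv_inv]
    ring
  have h5 : x ^ (-u) * x ^ (-(v - δ)) = x ^ (-(u + v - δ)) := by
    rw [← Real.rpow_add hx]; congr 1; ring
  calc x ^ (-u) * y ^ (-v) = x ^ (-u) * y ^ (-(v - δ)) * y ^ (-δ) := by rw [h1]; ring
    _ ≤ x ^ (-u) * x ^ (-(v - δ)) * ((J / 2) ^ (-δ)) := by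
        have := Real.rpow_nonneg hx.le (-u)
        have := Real.rpow_nonneg hy.le (-(v - δ))
        have := Real.rpow_nonneg hy.le (-δ)
        exact mul_le_mul (mul_le_mul_of_nonneg_left h2 (by assumption)) h3 (by assumption)
          (by positivity)
    _ = 2 ^ δ * J ^ (-δ) * x ^ (-(u + v - δ)) := by rw [h4, h5]; ring

lemma tsum_pi_prod (g : ℤ → ℝ≥0∞) : ∀ n : ℕ,
    ∑' m : Fin n → ℤ, ∏ i, g (m i) = (∑' k : ℤ, g k) ^ n := by
  intro n
  induction n with
  | zero =>
    rw [tsum_eq_single (fun i => (0:ℤ)) (fun b hb => absurd (Subsingleton.elim b _) hb)]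
    simp
  | succ n ih =>
    rw [← (Fin.consEquiv (fun _ : Fin (n+1) => ℤ)).tsum_eq]
    simp only [Fin.consEquiv_apply]
    rw [ENNReal.tsum_prod (f := fun (a : ℤ) (m : Fin n → ℤ) => ∏ i : Fin (n+1), g (Fin.cons (α := fun _ : Fin (n+1) => ℤ) a m i))]
    have : ∀ (a : ℤ) (m : Fin n → ℤ),
        (∏ i, g (Fin.cons (α := fun _ : Fin (n+1) => ℤ) a m i)) = g a * ∏ i, g (m i) := by
      intro a m
      rw [Fin.prod_univ_succ]
      simp [Fin.cons_succ]
    simp_rw [this, ENNReal.tsum_mul_left, ENNReal.tsum_mul_right, ih]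
    ring

lemma summable_aux {p : ℝ} (hp : 1 < p) :
    Summable (fun k : ℤ => (1 + |(k : ℝ)|) ^ (-p)) := by
  have h1 := Real.summable_abs_int_rpow hp
  have h2 : Summable (fun k : ℤ => if k = 0 then (1:ℝ) else 0) := by
    apply summable_of_ne_finset_zero (s := {0})
    intro k hk
    simp only [Finset.mem_singleton] at hk
    simp [hk]
  refine Summable.of_nonneg_of_le (fun k => Real.rpow_nonneg (by positivity) _) ?_ (h1.add h2)
  intro k
  by_cases hk : k = 0
  · subst hk
    simp [Real.zero_rpow (by linarith : -p ≠ 0)]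
  · have h3 : (1:ℝ) ≤ |(k:ℝ)| := by
      rw [← Int.cast_abs]; exact_mod_cast Int.one_le_abs hk
    have h4 : (1 + |(k:ℝ)|) ^ (-p) ≤ |(k:ℝ)| ^ (-p) :=
      Real.rpow_le_rpow_of_nonpos (by linarith) (by linarith) (by linarith)
    simpa [hk] using h4

lemma tsum_znorm_rpow_lt_top {d : ℕ} (hd : 1 ≤ d) {c : ℝ} (hc : (d:ℝ) < c) :
    (∑' m : Fin d → ℤ, if m ≠ 0 then ENNReal.ofReal (znorm m ^ (-c)) else 0) < ⊤ := by
  have hd0 : (0:ℝ) < d := by exact_mod_cast hd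
  set p : ℝ := c / d with hp_def
  have hp : 1 < p := (one_lt_div hd0).mpr hc
  set g : ℤ → ℝ≥0∞ := fun k => ENNReal.ofReal ((1 + |(k:ℝ)|) ^ (-p)) with hg_def
  have key : ∀ m : Fin d → ℤ,
      (if m ≠ 0 then ENNReal.ofReal (znorm m ^ (-c)) else 0)
        ≤ ENNReal.ofReal (2 ^ c) * ∏ i, g (m i) := by
    intro m
    split_ifs with hm
    · have hZ1 := one_le_znorm hm
      have hZ0 : 0 < znorm m := by linarith
      have hfac : ∀ i, (1 + |(m i : ℝ)|) ≤ 2 * znorm m := fun i => by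
        have := abs_coord_le_znorm m i; linarith
      have hPpos : (0:ℝ) < ∏ i, (1 + |(m i : ℝ)|) :=
        Finset.prod_pos (fun i _ => by positivity)
      have hP : (∏ i, (1 + |(m i : ℝ)|)) ≤ (2 * znorm m) ^ d := by
        calc (∏ i, (1 + |(m i : ℝ)|)) ≤ ∏ _i : Fin d, (2 * znorm m) :=
              Finset.prod_le_prod (fun i _ => by positivity) (fun i _ => hfac i)
          _ = (2 * znorm m) ^ d := by simp
      have h6 : (∏ i, (1 + |(m i : ℝ)|)) ^ p ≤ 2 ^ c * znorm m ^ c := by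
        calc (∏ i, (1 + |(m i : ℝ)|)) ^ p ≤ ((2 * znorm m) ^ d : ℝ) ^ p :=
              Real.rpow_le_rpow hPpos.le hP (by positivity)
          _ = (2 * znorm m) ^ ((d:ℝ) * p) := (Real.rpow_natCast_mul (by positivity) d p).symm
          _ = (2 * znorm m) ^ c := by rw [show (d:ℝ) * p = c by rw [hp_def]; field_simp]
          _ = 2 ^ c * znorm m ^ c := Real.mul_rpow (by norm_num) hZ0.le
      have hPp : (0:ℝ) < (∏ i, (1 + |(m i : ℝ)|)) ^ p := Real.rpow_pos_of_pos hPpos _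
      have target : znorm m ^ (-c) ≤ 2 ^ c * (∏ i, (1 + |(m i : ℝ)|)) ^ (-p) := by
        rw [Real.rpow_neg hZ0.le, Real.rpow_neg hPpos.le]
        have h2c : (0:ℝ) < 2 ^ c := Real.rpow_pos_of_pos (by norm_num) _
        have hZc : (0:ℝ) < znorm m ^ c := Real.rpow_pos_of_pos hZ0 _
        rw [← div_eq_mul_inv, le_div_iff₀ hPp, inv_mul_eq_div, div_le_iff₀ hZc]
        linarith [h6]
      calc ENNReal.ofReal (znorm m ^ (-c))
          ≤ ENNReal.ofReal (2 ^ c * (∏ i, (1 + |(m i : ℝ)|)) ^ (-p)) :=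
            ENNReal.ofReal_le_ofReal target
        _ = ENNReal.ofReal (2 ^ c) * ENNReal.ofReal ((∏ i, (1 + |(m i : ℝ)|)) ^ (-p)) :=
            ENNReal.ofReal_mul (by positivity)
        _ = ENNReal.ofReal (2 ^ c) * ∏ i, g (m i) := by
            congr 1
            rw [← Real.finset_prod_rpow _ _ (fun i _ => by positivity) (-p),
              ENNReal.ofReal_prod_of_nonneg (fun i _ => by positivity)]
    · simp
  calc (∑' m : Fin d → ℤ, if m ≠ 0 then ENNReal.ofReal (znorm m ^ (-c)) else 0)
      ≤ ∑' m : Fin d → ℤ, ENNReal.ofReal (2 ^ c) * ∏ i, g (m i) := ENNReal.tsum_le_tsum key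
    _ = ENNReal.ofReal (2 ^ c) * (∑' k : ℤ, g k) ^ d := by
        rw [ENNReal.tsum_mul_left, tsum_pi_prod]
    _ < ⊤ := by
        have hfin : (∑' k : ℤ, g k) ≠ ⊤ := by
          rw [hg_def, ← ENNReal.ofReal_tsum_of_nonneg (fun k => by positivity) (summable_aux hp)]
          exact ENNReal.ofReal_ne_top
        exact ENNReal.mul_lt_top ENNReal.ofReal_lt_top (ENNReal.pow_lt_top hfin.lt_top)

/-- For `a, b > 0` with `a + b > d` and
`δ ∈ (0, min(a, b, a+b−d))` there is `C = C(a,b,δ,d)` such that for every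
`j ∈ ℤ^d∖{0}`: `Σ_{l ≠ 0, l ≠ j} |l|^{−a} |j−l|^{−b} ≤ C |j|^{−δ}` (the sum, taken in
`ℝ≥0∞`, being in particular finite). -/
theorem statement13 (d : ℕ) (hd : 1 ≤ d) (a b δ : ℝ) (ha : 0 < a) (hb : 0 < b)
    (hab : (d : ℝ) < a + b) (hδ0 : 0 < δ) (hδ : δ < min a (min b (a + b - d))) :
    ∃ C : ℝ, 0 < C ∧ ∀ j : Fin d → ℤ, j ≠ 0 →
      (∑' l : Fin d → ℤ,
          if l ≠ 0 ∧ l ≠ j then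
            ENNReal.ofReal (znorm l ^ (-a) * znorm (j - l) ^ (-b))
          else 0)
        ≤ ENNReal.ofReal (C * znorm j ^ (-δ)) := by
  have hδa : δ < a := lt_of_lt_of_le hδ (min_le_left _ _)
  have hδb : δ < b := lt_of_lt_of_le hδ ((min_le_right _ _).trans (min_le_left _ _))
  have hδd : δ < a + b - d := lt_of_lt_of_le hδ ((min_le_right _ _).trans (min_le_right _ _))
  set c : ℝ := a + b - δ with hc_def
  have hc : (d : ℝ) < c := by simp only [hc_def]; linarith
  set T : ℝ≥0∞ := ∑' m : Fin d → ℤ, if m ≠ 0 then ENNReal.ofReal (znorm m ^ (-c)) else 0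
    with hT_def
  have hT : T < ⊤ := tsum_znorm_rpow_lt_top hd hc
  refine ⟨2 ^ δ * 2 * T.toReal + 1, by positivity, fun j hj => ?_⟩
  set J : ℝ := znorm j with hJ_def
  have hJ1 : 1 ≤ J := one_le_znorm hj
  set G : (Fin d → ℤ) → ℝ≥0∞ :=
    fun l => if l ≠ 0 then ENNReal.ofReal (znorm l ^ (-c)) else 0 with hG_def
  set H : (Fin d → ℤ) → ℝ≥0∞ :=
    fun l => if l ≠ j then ENNReal.ofReal (znorm (j - l) ^ (-c)) else 0 with hH_def
  have point : ∀ l : Fin d → ℤ,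
      (if l ≠ 0 ∧ l ≠ j then ENNReal.ofReal (znorm l ^ (-a) * znorm (j - l) ^ (-b)) else 0)
        ≤ ENNReal.ofReal (2 ^ δ * J ^ (-δ)) * (G l + H l) := by
    intro l
    split_ifs with h
    · obtain ⟨hl0, hlj⟩ := h
      have hL1 : 1 ≤ znorm l := one_le_znorm hl0
      have hM1 : 1 ≤ znorm (j - l) := one_le_znorm (sub_ne_zero.mpr (Ne.symm hlj))
      have htri : J ≤ znorm l + znorm (j - l) := znorm_triangle j l
      have hreal : znorm l ^ (-a) * znorm (j - l) ^ (-b)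
          ≤ 2 ^ δ * J ^ (-δ) * (znorm l ^ (-c) + znorm (j - l) ^ (-c)) := by
        rcases le_total (znorm l) (znorm (j - l)) with hcase | hcase
        · have h1 := aux_rpow (x := znorm l) (y := znorm (j - l)) (J := J) (u := a) (v := b)
            (δ := δ) (by linarith) hcase (by linarith) (by linarith) hδ0 hδb.le
          have hcc : -(a + b - δ) = -c := by rw [hc_def]
          rw [hcc] at h1
          refine h1.trans ?_
          rw [mul_add]
          exact le_add_of_nonneg_right (by positivity)
        · have h1 := aux_rpow (x := znorm (j - l)) (y := znorm l) (J := J) (u := b) (v := a)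
            (δ := δ) (by linarith) hcase (by linarith) (by linarith) hδ0 hδa.le
          have hcc : -(b + a - δ) = -c := by rw [hc_def]; ring
          rw [hcc] at h1
          calc znorm l ^ (-a) * znorm (j - l) ^ (-b)
              = znorm (j - l) ^ (-b) * znorm l ^ (-a) := by ring
            _ ≤ 2 ^ δ * J ^ (-δ) * znorm (j - l) ^ (-c) := h1
            _ ≤ 2 ^ δ * J ^ (-δ) * (znorm l ^ (-c) + znorm (j - l) ^ (-c)) := by
                rw [mul_add]
                exact le_add_of_nonneg_left (by positivity)
      have hGl : G l = ENNReal.ofReal (znorm l ^ (-c)) := if_pos hl0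
      have hHl : H l = ENNReal.ofReal (znorm (j - l) ^ (-c)) := if_pos hlj
      calc ENNReal.ofReal (znorm l ^ (-a) * znorm (j - l) ^ (-b))
          ≤ ENNReal.ofReal (2 ^ δ * J ^ (-δ) * (znorm l ^ (-c) + znorm (j - l) ^ (-c))) :=
            ENNReal.ofReal_le_ofReal hreal
        _ = ENNReal.ofReal (2 ^ δ * J ^ (-δ)) *
              ENNReal.ofReal (znorm l ^ (-c) + znorm (j - l) ^ (-c)) :=
            ENNReal.ofReal_mul (by positivity)
        _ = ENNReal.ofReal (2 ^ δ * J ^ (-δ)) * (G l + H l) := by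
            rw [hGl, hHl, ENNReal.ofReal_add (by positivity) (by positivity)]
    · exact zero_le
  have hHsum : (∑' l : Fin d → ℤ, H l) = T := by
    rw [← (Equiv.subLeft j).tsum_eq H]
    rw [hT_def]
    refine tsum_congr fun x => ?_
    simp only [Equiv.subLeft_apply, hH_def, sub_sub_cancel]
    by_cases hx : x = 0
    · subst hx; simp
    · rw [if_pos, if_pos hx]
      intro hcon
      exact hx (by simpa using sub_eq_self.mp hcon)
  have hTR : (0:ℝ) ≤ T.toReal := ENNReal.toReal_nonneg
  calc (∑' l : Fin d → ℤ,
        if l ≠ 0 ∧ l ≠ j then ENNReal.ofReal (znorm l ^ (-a) * znorm (j - l) ^ (-b)) else 0)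
      ≤ ∑' l : Fin d → ℤ, ENNReal.ofReal (2 ^ δ * J ^ (-δ)) * (G l + H l) :=
        ENNReal.tsum_le_tsum point
    _ = ENNReal.ofReal (2 ^ δ * J ^ (-δ)) * ((∑' l, G l) + ∑' l, H l) := by
        rw [ENNReal.tsum_mul_left, ENNReal.tsum_add]
    _ = ENNReal.ofReal (2 ^ δ * J ^ (-δ)) * (T + T) := by rw [hHsum]
    _ = ENNReal.ofReal (2 ^ δ * J ^ (-δ)) * ENNReal.ofReal (T.toReal + T.toReal) := by
        rw [ENNReal.ofReal_add hTR hTR, ENNReal.ofReal_toReal hT.ne]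
    _ = ENNReal.ofReal (2 ^ δ * J ^ (-δ) * (T.toReal + T.toReal)) :=
        (ENNReal.ofReal_mul (by positivity)).symm
    _ ≤ ENNReal.ofReal ((2 ^ δ * 2 * T.toReal + 1) * J ^ (-δ)) := by
        apply ENNReal.ofReal_le_ofReal
        have hJδ : (0:ℝ) ≤ J ^ (-δ) := Real.rpow_nonneg (by linarith) _
        nlinarith [Real.rpow_nonneg (show (0:ℝ) ≤ 2 by norm_num) δ]


end GaleatiLuo
end
end

section
/- Let d ≥ 1 and let a, b > 0 with a + b > d. Then the sums Σ_{l ∈ ℤ^d, l ≠ 0, l ≠ j} |l|^{−a} |j−l|^{−b} are finite and bounded uniformly over j ∈ ℤ^d: there exists a constant C = C(a, b, d) such that Σ_{l ∈ ℤ^d, l ≠ 0, l ≠ j} |l|^{−a} |j−l|^{−b} ≤ C for all j ∈ ℤ^d, where |·| denotes the Euclidean norm on ℝ^d. -/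
open MeasureTheory Filter
open scoped ENNReal NNReal

noncomputable section

namespace GaleatiLuo


/-! ### Auxiliary lemmas for Statement 14 -/

lemma aux_coord_le_znorm {d : ℕ} (l : Fin d → ℤ) (i : Fin d) : |(l i : ℝ)| ≤ znorm l := by
  rw [← Real.sqrt_sq_eq_abs]
  exact Real.sqrt_le_sqrt
    (Finset.single_le_sum (fun j _ => sq_nonneg ((l j : ℝ))) (Finset.mem_univ i))

lemma aux_one_le_znorm {d : ℕ} {l : Fin d → ℤ} (hl : l ≠ 0) : 1 ≤ znorm l := by
  obtain ⟨i, hi⟩ : ∃ i, l i ≠ 0 := by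
    by_contra h; push_neg at h; exact hl (funext h)
  have h1 : (1 : ℝ) ≤ |(l i : ℝ)| := by
    rw [← Int.cast_abs]; exact_mod_cast Int.one_le_abs hi
  exact h1.trans (aux_coord_le_znorm l i)

lemma aux_znorm_pos {d : ℕ} {l : Fin d → ℤ} (hl : l ≠ 0) : 0 < znorm l :=
  lt_of_lt_of_le one_pos (aux_one_le_znorm hl)

lemma aux_key_bound (x y a b : ℝ) (hx : 1 ≤ x) (hy : 1 ≤ y) (ha : 0 < a) (hb : 0 < b) :
    x ^ (-a) * y ^ (-b) ≤ x ^ (-(a+b)) + y ^ (-(a+b)) := by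
  have hx0 : (0:ℝ) < x := lt_of_lt_of_le one_pos hx
  have hy0 : (0:ℝ) < y := lt_of_lt_of_le one_pos hy
  rcases le_total x y with h | h
  · have h1 : y ^ (-b) ≤ x ^ (-b) :=
      Real.rpow_le_rpow_of_nonpos hx0 h (neg_nonpos.mpr hb.le)
    calc x ^ (-a) * y ^ (-b) ≤ x ^ (-a) * x ^ (-b) :=
          mul_le_mul_of_nonneg_left h1 (Real.rpow_nonneg hx0.le _)
      _ = x ^ (-(a+b)) := by rw [← Real.rpow_add hx0]; ring_nf
      _ ≤ _ := le_add_of_nonneg_right (Real.rpow_nonneg hy0.le _)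
  · have h1 : x ^ (-a) ≤ y ^ (-a) :=
      Real.rpow_le_rpow_of_nonpos hy0 h (neg_nonpos.mpr ha.le)
    calc x ^ (-a) * y ^ (-b) ≤ y ^ (-a) * y ^ (-b) :=
          mul_le_mul_of_nonneg_right h1 (Real.rpow_nonneg hy0.le _)
      _ = y ^ (-(a+b)) := by rw [← Real.rpow_add hy0]; ring_nf
      _ ≤ _ := le_add_of_nonneg_left (Real.rpow_nonneg hx0.le _)

lemma aux_prod_bound {d : ℕ} (hd : 1 ≤ d) {l : Fin d → ℤ} (hl : l ≠ 0) (s : ℝ) (hs : 0 < s) :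
    znorm l ^ (-s) ≤ 2 ^ s * ∏ i, ((1:ℝ) + |(l i : ℝ)|) ^ (-(s / d)) := by
  set N := znorm l with hN
  have hN1 : 1 ≤ N := aux_one_le_znorm hl
  have hN0 : 0 < N := aux_znorm_pos hl
  set p := s / d with hpdef
  have hd0 : (0:ℝ) < d := by exact_mod_cast hd
  have hp0 : 0 < p := div_pos hs hd0
  have hprod : (∏ i, ((1:ℝ) + |(l i : ℝ)|)) ≤ (2 * N) ^ (d:ℕ) := by
    calc (∏ i, ((1:ℝ) + |(l i : ℝ)|)) ≤ ∏ _i : Fin d, (2 * N) := by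
          apply Finset.prod_le_prod (fun i _ => by positivity)
          intro i _
          have := (aux_coord_le_znorm l i).trans_eq hN.symm
          linarith
      _ = (2 * N) ^ (d:ℕ) := by rw [Finset.prod_const, Finset.card_univ, Fintype.card_fin]
  have hprodpos : (0:ℝ) < ∏ i, ((1:ℝ) + |(l i : ℝ)|) :=
    Finset.prod_pos fun i _ => by positivity
  have h2N : (0:ℝ) < 2 * N := by linarith
  have hpow : (∏ i, ((1:ℝ) + |(l i : ℝ)|)) ^ p ≤ (2 * N) ^ s := by
    calc (∏ i, ((1:ℝ) + |(l i : ℝ)|)) ^ p ≤ ((2 * N) ^ (d:ℕ)) ^ p :=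
          Real.rpow_le_rpow hprodpos.le hprod hp0.le
      _ = (2 * N) ^ ((d:ℝ) * p) := by
          rw [← Real.rpow_natCast (2*N) d, ← Real.rpow_mul h2N.le]
      _ = (2 * N) ^ s := by
          congr 1
          rw [hpdef]; field_simp [hd0.ne']
  have hinv : (2 * N) ^ (-s) ≤ (∏ i, ((1:ℝ) + |(l i : ℝ)|)) ^ (-p) := by
    rw [Real.rpow_neg h2N.le, Real.rpow_neg hprodpos.le]
    exact inv_anti₀ (Real.rpow_pos_of_pos hprodpos p) hpow
  have hsplit : N ^ (-s) = 2 ^ s * (2 * N) ^ (-s) := by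
    rw [Real.mul_rpow (by norm_num) hN0.le, ← mul_assoc, ← Real.rpow_add two_pos]
    simp
  rw [hsplit, Real.finset_prod_rpow Finset.univ _ (fun i _ => by positivity) (-p)]
  exact mul_le_mul_of_nonneg_left hinv (by positivity)

lemma aux_factor (F : ℤ → ℝ≥0∞) (d : ℕ) :
    ∑' l : Fin d → ℤ, ∏ i, F (l i) = (∑' m : ℤ, F m) ^ d := by
  induction d with
  | zero =>
    rw [tsum_eq_single (0 : Fin 0 → ℤ) (fun b hb => absurd (Subsingleton.elim b 0) hb)]
    simp
  | succ n ih =>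
    rw [← (Fin.consEquiv fun _ : Fin (n+1) => ℤ).tsum_eq]
    have h2 : ∀ q : ℤ × (Fin n → ℤ),
        (∏ i, F ((Fin.consEquiv fun _ => ℤ) q i)) = F q.1 * ∏ i, F (q.2 i) := by
      intro q
      simp [Fin.consEquiv, Fin.prod_univ_succ]
    calc ∑' q : ℤ × (Fin n → ℤ), ∏ i, F ((Fin.consEquiv fun _ => ℤ) q i)
        = ∑' q : ℤ × (Fin n → ℤ), F q.1 * ∏ i, F (q.2 i) := tsum_congr h2
      _ = ∑' (m : ℤ), ∑' (l : Fin n → ℤ), F m * ∏ i, F (l i) :=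
          ENNReal.tsum_prod (f := fun (m : ℤ) (l : Fin n → ℤ) => F m * ∏ i, F (l i))
      _ = (∑' m : ℤ, F m) ^ (n + 1) := by
          simp_rw [ENNReal.tsum_mul_left]
          rw [ENNReal.tsum_mul_right, ih, pow_succ]
          ring

lemma aux_summable (p : ℝ) (hp : 1 < p) :
    Summable (fun m : ℤ => ((1:ℝ) + |(m:ℝ)|) ^ (-p)) := by
  have hnat : Summable (fun n : ℕ => ((1:ℝ) + (n:ℝ)) ^ (-p)) := by
    have h1 := (Real.summable_nat_rpow (p := -p)).mpr (by linarith)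
    have h2 := (summable_nat_add_iff 1).mpr h1
    refine h2.congr fun n => ?_
    push_cast; ring_nf
  refine Summable.of_nat_of_neg_add_one
    (hnat.congr fun n => by rw [Int.cast_natCast, abs_of_nonneg (by positivity)]) ?_
  refine ((summable_nat_add_iff 1).mpr hnat).congr fun n => ?_
  push_cast
  rw [abs_neg, abs_of_nonneg (by positivity)]

/-- For `a, b > 0` with `a + b > d`, the sums
`Σ_{l ≠ 0, l ≠ j} |l|^{−a} |j−l|^{−b}` are finite, uniformly bounded over `j ∈ ℤ^d`:
there is `C = C(a,b,d)` with `Σ_{l ≠ 0, l ≠ j} |l|^{−a} |j−l|^{−b} ≤ C` for all `j`. -/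
theorem statement14 (d : ℕ) (hd : 1 ≤ d) (a b : ℝ) (ha : 0 < a) (hb : 0 < b)
    (hab : (d : ℝ) < a + b) :
    ∃ C : ℝ, 0 < C ∧ ∀ j : Fin d → ℤ,
      (∑' l : Fin d → ℤ,
          if l ≠ 0 ∧ l ≠ j then
            ENNReal.ofReal (znorm l ^ (-a) * znorm (j - l) ^ (-b))
          else 0)
        ≤ ENNReal.ofReal C := by
  classical
  have hd0 : (0:ℝ) < d := by exact_mod_cast hd
  set s := a + b with hsdef
  have hs0 : 0 < s := by positivity
  set p := s / d with hpdef
  have hp1 : 1 < p := (one_lt_div hd0).mpr hab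
  have hsum : Summable (fun m : ℤ => ((1:ℝ) + |(m:ℝ)|) ^ (-p)) := aux_summable p hp1
  set F : ℤ → ℝ≥0∞ := fun m => ENNReal.ofReal (((1:ℝ) + |(m:ℝ)|) ^ (-p)) with hF
  have hS : (∑' m : ℤ, F m) ≠ ∞ := by
    rw [hF, ← ENNReal.ofReal_tsum_of_nonneg (fun m => Real.rpow_nonneg (by positivity) _) hsum]
    exact ENNReal.ofReal_ne_top
  set M : ℝ≥0∞ := ENNReal.ofReal (2 ^ s) * (∑' m : ℤ, F m) ^ d with hMdef
  have hM : M ≠ ∞ := ENNReal.mul_ne_top ENNReal.ofReal_ne_top (ENNReal.pow_ne_top hS)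
  have hTbound : (∑' l : Fin d → ℤ,
      (if l ≠ 0 then ENNReal.ofReal (znorm l ^ (-s)) else 0)) ≤ M := by
    calc (∑' l : Fin d → ℤ, (if l ≠ 0 then ENNReal.ofReal (znorm l ^ (-s)) else 0))
        ≤ ∑' l : Fin d → ℤ, ENNReal.ofReal (2 ^ s) * ∏ i, F (l i) := by
          apply ENNReal.tsum_le_tsum
          intro l
          by_cases hl : l ≠ 0
          · rw [if_pos hl]
            calc ENNReal.ofReal (znorm l ^ (-s))
                ≤ ENNReal.ofReal (2 ^ s * ∏ i, ((1:ℝ) + |(l i : ℝ)|) ^ (-p)) :=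
                  ENNReal.ofReal_le_ofReal (aux_prod_bound hd hl s hs0)
              _ = ENNReal.ofReal (2 ^ s) * ∏ i, F (l i) := by
                  rw [ENNReal.ofReal_mul (by positivity),
                    ENNReal.ofReal_prod_of_nonneg (fun i _ => by positivity)]
          · rw [if_neg hl]; exact zero_le
      _ = M := by rw [ENNReal.tsum_mul_left, aux_factor F d]
  have hC0 : (0:ℝ) < (2 * M).toReal + 1 := by
    have := ENNReal.toReal_nonneg (a := 2 * M); linarith
  refine ⟨(2 * M).toReal + 1, hC0, fun j => ?_⟩
  have key : ∀ l : Fin d → ℤ,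
      (if l ≠ 0 ∧ l ≠ j then ENNReal.ofReal (znorm l ^ (-a) * znorm (j - l) ^ (-b)) else 0)
        ≤ (if l ≠ 0 then ENNReal.ofReal (znorm l ^ (-s)) else 0)
          + (if l ≠ j then ENNReal.ofReal (znorm (j - l) ^ (-s)) else 0) := by
    intro l
    by_cases h : l ≠ 0 ∧ l ≠ j
    · rw [if_pos h, if_pos h.1, if_pos h.2]
      have hjl : j - l ≠ 0 := sub_ne_zero.mpr (Ne.symm h.2)
      rw [← ENNReal.ofReal_add (Real.rpow_nonneg (aux_znorm_pos h.1).le _)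
        (Real.rpow_nonneg (aux_znorm_pos hjl).le _)]
      exact ENNReal.ofReal_le_ofReal
        (aux_key_bound _ _ a b (aux_one_le_znorm h.1) (aux_one_le_znorm hjl) ha hb)
    · rw [if_neg h]; exact zero_le
  have hre : (∑' l : Fin d → ℤ,
      (if l ≠ j then ENNReal.ofReal (znorm (j - l) ^ (-s)) else 0))
      = ∑' l : Fin d → ℤ, (if l ≠ 0 then ENNReal.ofReal (znorm l ^ (-s)) else 0) := by
    rw [← (Equiv.subLeft j).tsum_eq
      (fun l => if l ≠ j then ENNReal.ofReal (znorm (j - l) ^ (-s)) else 0)]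
    refine tsum_congr fun m => ?_
    have h1 : j - m ≠ j ↔ m ≠ 0 := by
      constructor
      · intro h h0; exact h (by rw [h0, sub_zero])
      · intro h h0; exact h (by have := sub_eq_self.mp h0; exact this)
    simp only [Equiv.subLeft_apply, sub_sub_cancel]
    by_cases hm : m ≠ 0
    · rw [if_pos (h1.mpr hm), if_pos hm]
    · rw [if_neg (fun hh => hm (h1.mp hh)), if_neg hm]
  calc (∑' l : Fin d → ℤ,
        if l ≠ 0 ∧ l ≠ j then ENNReal.ofReal (znorm l ^ (-a) * znorm (j - l) ^ (-b)) else 0)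
      ≤ ∑' l : Fin d → ℤ,
        ((if l ≠ 0 then ENNReal.ofReal (znorm l ^ (-s)) else 0)
          + (if l ≠ j then ENNReal.ofReal (znorm (j - l) ^ (-s)) else 0)) :=
        ENNReal.tsum_le_tsum key
    _ = (∑' l : Fin d → ℤ, (if l ≠ 0 then ENNReal.ofReal (znorm l ^ (-s)) else 0))
        + ∑' l : Fin d → ℤ, (if l ≠ j then ENNReal.ofReal (znorm (j - l) ^ (-s)) else 0) :=
        ENNReal.tsum_add
    _ ≤ M + M := by rw [hre]; exact add_le_add hTbound hTbound
    _ = 2 * M := (two_mul M).symm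
    _ ≤ ENNReal.ofReal ((2 * M).toReal + 1) := by
        have h2M : 2 * M ≠ ∞ := ENNReal.mul_ne_top (by norm_num) hM
        rw [← ENNReal.ofReal_toReal h2M]
        exact ENNReal.ofReal_le_ofReal (by rw [ENNReal.toReal_ofReal ENNReal.toReal_nonneg]; linarith)


end GaleatiLuo
end
end

section
/- Let d ≥ 2 and β > 1 + d/2. There exists a constant C = C(d, β) such that for every f ∈ L²(𝕋^d) and every family (a_k)_{k ∈ ℤ^d∖{0}} of unit vectors in ℝ^d with a_k · k = 0 for all k: Σ_{k ∈ ℤ^d∖{0}} Σ_{l ∈ ℤ^d} (1+|l|²)^{−β} |2π l·a_k|² |f̂(l−k)|² ≤ C ‖f‖²_{L²}. (The inner sum over l equals ‖div(a_k e_k f)‖²_{H^{−β}}, i.e. the squared H^{−β} norm of σ_k·∇f for the divergence-free field σ_k = a_k e_k, when f ∈ H¹.) -/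
open MeasureTheory Filter
open scoped ENNReal NNReal

noncomputable section

namespace GaleatiLuo


open Complex
open scoped Real

/-! ### Auxiliary lemmas -/

lemma aux_int1 (n : ℤ) : (∫ x in Set.Ico (0:ℝ) 1, Complex.exp ((2 * (π:ℂ) * I * n) * x))
    = if n = 0 then 1 else 0 := by
  rw [integral_Ico_eq_integral_Ioo, ← integral_Ioc_eq_integral_Ioo,
    ← intervalIntegral.integral_of_le (by norm_num : (0:ℝ) ≤ 1)]
  by_cases h : n = 0
  · simp [h]
  · have hc : (2 * (π:ℂ) * I * n) ≠ 0 := by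
      simp [Real.pi_ne_zero, Complex.I_ne_zero, h]
    rw [integral_exp_mul_complex hc]
    have h1 : Complex.exp (2 * (π:ℂ) * I * n * 1) = 1 := by
      rw [mul_one]
      have := Complex.exp_int_mul_two_pi_mul_I n
      rw [← this]; ring_nf
    rw [Complex.ofReal_one, Complex.ofReal_zero, h1]
    simp [h]

lemma measurableSet_box (d : ℕ) : MeasurableSet (box d) :=
  MeasurableSet.univ_pi fun _ => measurableSet_Ico

/-- The character `e_k`. -/
def chr {d : ℕ} (k : Fin d → ℤ) : (Fin d → ℝ) → ℂ :=
  fun x => Complex.exp ((2 * (π:ℂ) * I) * ((∑ i, (k i : ℝ) * x i : ℝ) : ℂ))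

lemma chr_prod {d : ℕ} (k : Fin d → ℤ) (x : Fin d → ℝ) :
    chr k x = ∏ i, Complex.exp ((2 * (π:ℂ) * I * (k i)) * (x i)) := by
  rw [chr, ← Complex.exp_sum]
  congr 1
  push_cast
  rw [Finset.mul_sum]
  congr 1; funext i; ring

lemma intChr {d : ℕ} (k : Fin d → ℤ) :
    ∫ x, chr k x ∂(μT d) = if k = 0 then 1 else 0 := by
  have key : ∀ x : Fin d → ℝ, (box d).indicator (chr k) x
      = ∏ i, (Set.Ico (0:ℝ) 1).indicator
          (fun t => Complex.exp ((2 * (π:ℂ) * I * (k i)) * t)) (x i) := by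
    intro x
    by_cases hx : x ∈ box d
    · rw [Set.indicator_of_mem hx, chr_prod]
      refine Finset.prod_congr rfl fun i _ => ?_
      rw [Set.indicator_of_mem (hx i (Set.mem_univ i))]
    · rw [Set.indicator_of_notMem hx]
      rw [box, Set.mem_pi] at hx
      push_neg at hx
      obtain ⟨i, _, hi⟩ := hx
      exact (Finset.prod_eq_zero (Finset.mem_univ i) (Set.indicator_of_notMem hi _)).symm
  rw [μT, ← integral_indicator (measurableSet_box d)]
  simp_rw [key]
  rw [volume_pi, MeasureTheory.integral_fintype_prod_eq_prod
    (f := fun i => (Set.Ico (0:ℝ) 1).indicator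
      (fun t => Complex.exp ((2 * (π:ℂ) * I * (k i)) * t)))]
  have : ∀ i, (∫ t, (Set.Ico (0:ℝ) 1).indicator
        (fun t => Complex.exp ((2 * (π:ℂ) * I * (k i)) * t)) t)
      = if k i = 0 then 1 else 0 := by
    intro i
    rw [integral_indicator measurableSet_Ico, aux_int1]
  rw [Finset.prod_congr rfl fun i _ => this i]
  by_cases hk : k = 0
  · simp [hk]
  · rw [if_neg hk]
    obtain ⟨i, hi⟩ : ∃ i, k i ≠ 0 := by
      by_contra h; push_neg at h; exact hk (funext h)
    exact Finset.prod_eq_zero (Finset.mem_univ i) (if_neg hi)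

instance (d : ℕ) : IsProbabilityMeasure (μT d) := by
  constructor
  rw [μT, Measure.restrict_apply_univ, box, volume_pi_pi]
  simp [Real.volume_Ico]

lemma chr_continuous {d : ℕ} (k : Fin d → ℤ) : Continuous (chr k) := by
  apply Complex.continuous_exp.comp
  apply Continuous.mul continuous_const
  exact Complex.continuous_ofReal.comp (continuous_finset_sum _ fun i _ =>
    (continuous_const.mul (continuous_apply i)))

lemma chr_memL2 {d : ℕ} (k : Fin d → ℤ) : MemLp (chr k) 2 (μT d) := by
  refine MemLp.of_bound ((chr_continuous k).aestronglyMeasurable) 1 ?_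
  filter_upwards with x
  rw [chr, Complex.norm_exp]
  have : ((2 * (π:ℂ) * I) * ((∑ i, (k i : ℝ) * x i : ℝ) : ℂ)).re = 0 := by
    simp [Complex.mul_re, Complex.mul_im]
  rw [this, Real.exp_zero]

lemma conj_chr_mul {d : ℕ} (k k' : Fin d → ℤ) (x : Fin d → ℝ) :
    (starRingEnd ℂ) (chr k x) * chr k' x = chr (k' - k) x := by
  rw [chr, chr, chr, ← Complex.exp_conj, ← Complex.exp_add]
  congr 1
  rw [map_mul]
  have h1 : (starRingEnd ℂ) ((2 * (π:ℂ) * I)) = -(2 * (π:ℂ) * I) := by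
    simp only [map_mul, Complex.conj_I, map_ofNat, Complex.conj_ofReal]
    ring
  rw [h1, Complex.conj_ofReal]
  rw [show ∀ a b : ℝ, (-(2 * (π:ℂ) * I)) * a + (2 * (π:ℂ) * I) * b
      = (2 * (π:ℂ) * I) * ((b - a : ℝ) : ℂ) by
    intro a b; push_cast; ring]
  congr 2
  rw [← Finset.sum_sub_distrib]
  congr 1; funext i
  push_cast [Pi.sub_apply]
  ring

/-- The characters as elements of `L²(𝕋^d)`. -/
def chL {d : ℕ} (k : Fin d → ℤ) : Lp ℂ 2 (μT d) := (chr_memL2 k).toLp (chr k)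

lemma chL_orthonormal (d : ℕ) : Orthonormal ℂ (chL (d := d)) := by
  rw [orthonormal_iff_ite]
  intro k k'
  rw [MeasureTheory.L2.inner_def]
  have h1 : ∀ᵐ x ∂(μT d), (chL k : (Fin d → ℝ) → ℂ) x = chr k x := (chr_memL2 k).coeFn_toLp
  have h2 : ∀ᵐ x ∂(μT d), (chL k' : (Fin d → ℝ) → ℂ) x = chr k' x := (chr_memL2 k').coeFn_toLp
  have : ∫ x, (inner ℂ ((chL k : (Fin d → ℝ) → ℂ) x) ((chL k' : (Fin d → ℝ) → ℂ) x) : ℂ) ∂(μT d)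
      = ∫ x, chr (k' - k) x ∂(μT d) := by
    apply integral_congr_ae
    filter_upwards [h1, h2] with x e1 e2
    rw [e1, e2, RCLike.inner_apply, mul_comm, conj_chr_mul]
  rw [this, intChr]
  have : k' - k = 0 ↔ k = k' := by
    constructor
    · intro h; ext i; have := congrFun h i; simpa [sub_eq_zero, eq_comm] using this
    · intro h; rw [h]; simp
  by_cases h : k = k' <;> simp [h, this]

/-- Bessel's inequality for the torus characters. -/
lemma bessel {d : ℕ} (f : (Fin d → ℝ) → ℝ) (hm : Measurable f) (hf : spLp 2 f < ∞) :
    ∑' k : Fin d → ℤ, (‖fc f k‖₊ : ℝ≥0∞) ^ 2 ≤ spLp 2 f ^ 2 := by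
  set g : (Fin d → ℝ) → ℂ := fun x => (f x : ℂ) with hg
  have hnorm : ∀ x, ‖g x‖ = ‖f x‖ := fun x => Complex.norm_real _
  have heq : eLpNorm g 2 (μT d) = eLpNorm f 2 (μT d) :=
    eLpNorm_congr_norm_ae (Filter.Eventually.of_forall hnorm)
  have hgm : MemLp g 2 (μT d) := by
    constructor
    · exact (Complex.measurable_ofReal.comp hm).aestronglyMeasurable
    · rw [heq]; exact hf
  set F : Lp ℂ 2 (μT d) := hgm.toLp g with hF
  have hinner : ∀ k, inner ℂ (chL k) F = fc f k := by
    intro k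
    rw [MeasureTheory.L2.inner_def]
    have h1 : ∀ᵐ x ∂(μT d), (chL k : (Fin d → ℝ) → ℂ) x = chr k x := (chr_memL2 k).coeFn_toLp
    have h2 : ∀ᵐ x ∂(μT d), (F : (Fin d → ℝ) → ℂ) x = g x := hgm.coeFn_toLp
    rw [fc]
    apply integral_congr_ae
    filter_upwards [h1, h2] with x e1 e2
    rw [e1, e2, RCLike.inner_apply]
    rw [hg]
    have : (starRingEnd ℂ) (chr k x)
        = Complex.exp (-(2 * (Real.pi : ℂ) * Complex.I) * ((∑ i, (k i : ℝ) * x i : ℝ) : ℂ)) := by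
      rw [chr, ← Complex.exp_conj, map_mul]
      simp only [map_mul, Complex.conj_I, map_ofNat, Complex.conj_ofReal]
      ring_nf
    rw [this]
  have hb := (chL_orthonormal d).tsum_inner_products_le F
  have hs := (chL_orthonormal d).inner_products_summable (x := F)
  simp_rw [hinner] at hb hs
  have hFn : ‖F‖ = (spLp 2 f).toReal := by
    rw [hF, MeasureTheory.Lp.norm_toLp, heq, spLp]
  calc ∑' k : Fin d → ℤ, (‖fc f k‖₊ : ℝ≥0∞) ^ 2
      = ∑' k : Fin d → ℤ, ENNReal.ofReal (‖fc f k‖ ^ 2) := by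
        congr 1; funext k
        rw [ENNReal.ofReal_pow (norm_nonneg _), ← coe_nnnorm, ENNReal.ofReal_coe_nnreal]
    _ = ENNReal.ofReal (∑' k, ‖fc f k‖ ^ 2) :=
        (ENNReal.ofReal_tsum_of_nonneg (fun k => sq_nonneg _) hs).symm
    _ ≤ ENNReal.ofReal (‖F‖ ^ 2) := ENNReal.ofReal_le_ofReal hb
    _ = spLp 2 f ^ 2 := by
        rw [hFn, ENNReal.ofReal_pow ENNReal.toReal_nonneg, ENNReal.ofReal_toReal hf.ne]

lemma tsum_pi_pow (d : ℕ) (g : ℤ → ℝ≥0∞) :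
    ∑' j : Fin d → ℤ, ∏ i, g (j i) = (∑' n : ℤ, g n) ^ d := by
  induction d with
  | zero =>
    simp only [Finset.univ_eq_empty, Finset.prod_empty, pow_zero]
    exact tsum_eq_single (fun i => i.elim0) (fun b hb => absurd (funext fun i => i.elim0) hb)
  | succ d ih =>
    rw [← ((Fin.consEquiv (fun _ : Fin (d+1) => ℤ)).tsum_eq (f := fun j : Fin (d+1) → ℤ => ∏ i, g (j i)))]
    have key : ∀ p : ℤ × (Fin d → ℤ), (∏ i, g ((Fin.consEquiv (fun _ : Fin (d+1) => ℤ) p) i))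
        = g p.1 * ∏ i, g (p.2 i) := by
      intro p
      rw [Fin.prod_univ_succ]
      simp [Fin.consEquiv]
    simp_rw [key]
    rw [ENNReal.tsum_prod (f := fun (a : ℤ) (b : Fin d → ℤ) => g a * ∏ i, g (b i))]
    simp_rw [ENNReal.tsum_mul_left]
    rw [ENNReal.tsum_mul_right, ih, pow_succ]
    ring

lemma sum1 {t : ℝ} (ht : 1/2 < t) :
    ∑' n : ℤ, ENNReal.ofReal ((1 + (n:ℝ)^2) ^ (-t)) ≠ ∞ := by
  have ht' : (0:ℝ) < t := by linarith
  have hbound : ∀ n : ℤ, ENNReal.ofReal ((1 + (n:ℝ)^2) ^ (-t))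
      ≤ ENNReal.ofReal (|(n:ℝ)| ^ (-(2*t))) + (if n = 0 then 1 else 0 : ℝ≥0∞) := by
    intro n
    by_cases h : n = 0
    · subst h
      simp only [if_pos rfl]
      calc ENNReal.ofReal ((1 + ((0:ℤ):ℝ)^2) ^ (-t)) = 1 := by norm_num
        _ ≤ _ := le_add_self
    · rw [if_neg h, add_zero]
      apply ENNReal.ofReal_le_ofReal
      have hn : (0:ℝ) < |(n:ℝ)| := abs_pos.mpr (Int.cast_ne_zero.mpr h)
      have hn2 : (0:ℝ) < ((n:ℝ))^2 := by positivity
      calc (1 + (n:ℝ)^2)^(-t) ≤ (((n:ℝ))^2)^(-t) :=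
          Real.rpow_le_rpow_of_nonpos hn2 (by nlinarith) (by linarith)
        _ = |(n:ℝ)| ^ (-(2*t)) := by
          rw [show ((n:ℝ)^2) = |(n:ℝ)|^(2:ℕ) from (_root_.sq_abs _).symm,
            ← Real.rpow_natCast |(n:ℝ)| 2, ← Real.rpow_mul (abs_nonneg _)]
          norm_num
  have hsum : Summable (fun n : ℤ => |(n:ℝ)| ^ (-(2*t))) :=
    Real.summable_abs_int_rpow (by linarith)
  have fin : ∑' n : ℤ, ENNReal.ofReal ((1 + (n:ℝ)^2) ^ (-t)) < ∞ :=
    calc ∑' n : ℤ, ENNReal.ofReal ((1 + (n:ℝ)^2) ^ (-t))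
        ≤ ∑' n : ℤ, (ENNReal.ofReal (|(n:ℝ)| ^ (-(2*t)))
            + (if n = 0 then 1 else 0 : ℝ≥0∞)) :=
          ENNReal.tsum_le_tsum hbound
      _ = (∑' n : ℤ, ENNReal.ofReal (|(n:ℝ)| ^ (-(2*t))))
            + ∑' n : ℤ, (if n = 0 then 1 else 0 : ℝ≥0∞) :=
          ENNReal.tsum_add
      _ < ∞ := by
          rw [← ENNReal.ofReal_tsum_of_nonneg (fun n => Real.rpow_nonneg (abs_nonneg _) _) hsum,
            tsum_ite_eq]
          exact ENNReal.add_lt_top.mpr ⟨ENNReal.ofReal_lt_top, ENNReal.one_lt_top⟩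
  exact fin.ne

lemma latticeSum {d : ℕ} (hd : 0 < d) {β : ℝ} (hβ : (d:ℝ)/2 < β - 1) :
    ∑' j : Fin d → ℤ, ENNReal.ofReal ((1 + znorm j ^ 2) ^ (1 - β)) ≠ ∞ := by
  set t : ℝ := (β - 1) / d with htdef
  have hdR : (0:ℝ) < d := by exact_mod_cast hd
  have ht : 1/2 < t := by
    rw [htdef, lt_div_iff₀ hdR]
    linarith [hβ]
  have key : ∀ j : Fin d → ℤ, ENNReal.ofReal ((1 + znorm j ^ 2) ^ (1 - β))
      ≤ ∏ i, ENNReal.ofReal ((1 + ((j i : ℝ))^2) ^ (-t)) := by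
    intro j
    have hz : znorm j ^ 2 = ∑ i, ((j i : ℝ)) ^ 2 := by
      rw [znorm, Real.sq_sqrt (Finset.sum_nonneg fun i _ => sq_nonneg _)]
    set S : ℝ := 1 + ∑ i, ((j i : ℝ)) ^ 2 with hS
    have hS1 : (1:ℝ) ≤ S := by
      rw [hS]
      nlinarith [Finset.sum_nonneg (s := Finset.univ)
        (fun i (_ : i ∈ Finset.univ) => sq_nonneg ((j i : ℝ)))]
    have hSpos : (0:ℝ) < S := by linarith
    have hfac : ∀ i : Fin d, (0:ℝ) < 1 + ((j i : ℝ))^2 := fun i => by positivity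
    have hP : ∏ i, (1 + ((j i : ℝ))^2) ≤ S ^ d := by
      calc ∏ i, (1 + ((j i : ℝ))^2) ≤ ∏ _i : Fin d, S := by
            apply Finset.prod_le_prod (fun i _ => (hfac i).le)
            intro i _
            rw [hS]
            have : ((j i : ℝ))^2 ≤ ∑ i', ((j i' : ℝ))^2 :=
              Finset.single_le_sum (f := fun i' => ((j i' : ℝ))^2)
                (fun i' _ => sq_nonneg _) (Finset.mem_univ i)
            linarith
        _ = S ^ d := by rw [Finset.prod_const, Finset.card_univ, Fintype.card_fin]
    have hPpos : (0:ℝ) < ∏ i, (1 + ((j i : ℝ))^2) := Finset.prod_pos (fun i _ => hfac i)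
    rw [hz]
    rw [← ENNReal.ofReal_prod_of_nonneg (fun i _ => Real.rpow_nonneg (hfac i).le _)]
    apply ENNReal.ofReal_le_ofReal
    calc S ^ (1 - β) = (S ^ (d:ℝ)) ^ (-t) := by
          rw [← Real.rpow_mul hSpos.le]
          congr 1
          rw [htdef]
          field_simp
          ring
      _ ≤ (∏ i, (1 + ((j i : ℝ))^2)) ^ (-t) := by
          rw [Real.rpow_natCast S d]
          exact Real.rpow_le_rpow_of_nonpos hPpos hP (by linarith : -t ≤ 0)
      _ = ∏ i, (1 + ((j i : ℝ))^2) ^ (-t) :=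
          (Real.finset_prod_rpow _ _ (fun i _ => (hfac i).le) _).symm
  have hle : ∑' j : Fin d → ℤ, ENNReal.ofReal ((1 + znorm j ^ 2) ^ (1 - β))
      ≤ (∑' n : ℤ, ENNReal.ofReal ((1 + (n:ℝ)^2) ^ (-t))) ^ d :=
    (ENNReal.tsum_le_tsum key).trans_eq
      (tsum_pi_pow d (fun n => ENNReal.ofReal ((1 + (n:ℝ)^2) ^ (-t))))
  exact ne_top_of_le_ne_top (ENNReal.pow_ne_top (sum1 ht)) hle


/-- For `d ≥ 2` and `β > 1 + d/2` there is `C = C(d,β)` such that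
for every `f ∈ L²(𝕋^d)` and every family `(a_k)` of unit vectors with `a_k ⊥ k`:
`Σ_{k≠0} Σ_l (1+|l|²)^{−β} |2π l·a_k|² |f̂(l−k)|² ≤ C ‖f‖²_{L²}`
(the inner sum being `‖σ_k·∇f‖²_{H^{−β}}` for `σ_k = a_k e_k`). -/
theorem statement16 (d : ℕ) (hd : 2 ≤ d) (β : ℝ) (hβ : 1 + (d : ℝ) / 2 < β) :
    ∃ C : ℝ, 0 < C ∧
      ∀ f : (Fin d → ℝ) → ℝ, Measurable f → ZPeriodic f → spLp 2 f < ∞ →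
      ∀ a : (Fin d → ℤ) → Fin d → ℝ,
        (∀ k : Fin d → ℤ, k ≠ 0 → ∑ i, (a k i) ^ 2 = 1) →
        (∀ k : Fin d → ℤ, k ≠ 0 → ∑ i, a k i * (k i : ℝ) = 0) →
        (∑' k : Fin d → ℤ,
            if k ≠ 0 then
              ∑' l : Fin d → ℤ,
                ENNReal.ofReal
                    ((1 + znorm l ^ 2) ^ (-β)
                      * ((2 * Real.pi) ^ 2 * (∑ i, (l i : ℝ) * a k i) ^ 2))
                  * (‖fc f (l - k)‖₊ : ℝ≥0∞) ^ 2
            else 0)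
          ≤ ENNReal.ofReal C * spLp 2 f ^ 2 := by
  have hd0 : 0 < d := by omega
  set B : ℝ≥0∞ := ENNReal.ofReal ((2 * Real.pi)^2)
      * ∑' j : Fin d → ℤ, ENNReal.ofReal ((1 + znorm j ^ 2) ^ (1 - β)) with hB
  have hBne : B ≠ ∞ :=
    ENNReal.mul_ne_top ENNReal.ofReal_ne_top (latticeSum hd0 (by linarith))
  refine ⟨B.toReal + 1, by positivity, ?_⟩
  intro f hm _hper hf a ha _horth
  set nf : (Fin d → ℤ) → ℝ≥0∞ := fun m => (‖fc f m‖₊ : ℝ≥0∞) ^ 2 with hnf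
  set D : (Fin d → ℤ) → ℝ≥0∞ :=
    fun l => ENNReal.ofReal ((2 * Real.pi)^2 * (1 + znorm l ^ 2) ^ (1 - β)) with hD
  have hterm : ∀ (k l : Fin d → ℤ), k ≠ 0 →
      ENNReal.ofReal ((1 + znorm l ^ 2) ^ (-β)
        * ((2 * Real.pi) ^ 2 * (∑ i, (l i : ℝ) * a k i) ^ 2)) ≤ D l := by
    intro k l hk
    apply ENNReal.ofReal_le_ofReal
    have hz : znorm l ^ 2 = ∑ i, ((l i : ℝ)) ^ 2 := by
      rw [znorm, Real.sq_sqrt (Finset.sum_nonneg fun i _ => sq_nonneg _)]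
    have hzpos : (0:ℝ) < 1 + znorm l ^ 2 := by positivity
    have hcs : (∑ i, (l i : ℝ) * a k i) ^ 2 ≤ 1 + znorm l ^ 2 := by
      have h1 := Finset.sum_mul_sq_le_sq_mul_sq Finset.univ
        (fun i => ((l i : ℝ))) (fun i => a k i)
      rw [ha k hk] at h1
      rw [hz]
      linarith [h1]
    have hA : (0:ℝ) ≤ (1 + znorm l ^ 2) ^ (-β) := Real.rpow_nonneg hzpos.le _
    have key : (1 + znorm l ^ 2) ^ (1 - β) = (1 + znorm l ^ 2) ^ (-β) * (1 + znorm l ^ 2) := by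
      rw [show (1 - β) = -β + 1 by ring, Real.rpow_add hzpos, Real.rpow_one]
    rw [key]
    nlinarith [mul_le_mul_of_nonneg_left hcs hA, sq_nonneg (2 * Real.pi), hA,
      mul_le_mul_of_nonneg_left (mul_le_mul_of_nonneg_left hcs hA) (sq_nonneg (2 * Real.pi))]
  calc (∑' k : Fin d → ℤ,
          if k ≠ 0 then
            ∑' l : Fin d → ℤ,
              ENNReal.ofReal
                  ((1 + znorm l ^ 2) ^ (-β)
                    * ((2 * Real.pi) ^ 2 * (∑ i, (l i : ℝ) * a k i) ^ 2))
                * (‖fc f (l - k)‖₊ : ℝ≥0∞) ^ 2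
          else 0)
      ≤ ∑' k : Fin d → ℤ, ∑' m : Fin d → ℤ, D (m + k) * nf m := by
        apply ENNReal.tsum_le_tsum
        intro k
        by_cases hk : k ≠ 0
        · rw [if_pos hk]
          have step1 : ∑' l : Fin d → ℤ,
              ENNReal.ofReal
                  ((1 + znorm l ^ 2) ^ (-β)
                    * ((2 * Real.pi) ^ 2 * (∑ i, (l i : ℝ) * a k i) ^ 2))
                * (‖fc f (l - k)‖₊ : ℝ≥0∞) ^ 2
              ≤ ∑' l : Fin d → ℤ, D l * nf (l - k) :=
            ENNReal.tsum_le_tsum fun l => mul_le_mul_left (hterm k l hk) _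
          have step2 : ∑' l : Fin d → ℤ, D l * nf (l - k)
              = ∑' m : Fin d → ℤ, D (m + k) * nf m := by
            rw [← (Equiv.addRight k).tsum_eq (fun l => D l * nf (l - k))]
            apply tsum_congr
            intro m
            simp [Equiv.coe_addRight, add_sub_cancel_right]
          exact step1.trans_eq step2
        · rw [if_neg hk]; exact zero_le
    _ = ∑' m : Fin d → ℤ, (∑' k : Fin d → ℤ, D (m + k)) * nf m := by
        rw [ENNReal.tsum_comm]
        apply tsum_congr
        intro m
        rw [ENNReal.tsum_mul_right]
    _ = ∑' m : Fin d → ℤ, B * nf m := by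
        apply tsum_congr
        intro m
        congr 1
        have htrans : ∑' k : Fin d → ℤ, D (m + k) = ∑' j : Fin d → ℤ, D j :=
          (Equiv.addLeft m).tsum_eq D
        rw [htrans, hB, ← ENNReal.tsum_mul_left]
        apply tsum_congr
        intro j
        simp only [hD]
        rw [ENNReal.ofReal_mul (sq_nonneg _)]
    _ = B * ∑' m : Fin d → ℤ, nf m := ENNReal.tsum_mul_left
    _ ≤ B * spLp 2 f ^ 2 := mul_le_mul_right (bessel f hm hf) B
    _ ≤ ENNReal.ofReal (B.toReal + 1) * spLp 2 f ^ 2 := by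
        apply mul_le_mul_left
        exact le_trans (le_of_eq (ENNReal.ofReal_toReal hBne).symm)
          (ENNReal.ofReal_le_ofReal (by linarith))


end GaleatiLuo
end
end
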